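/- arXiv:2402.04851 — 5 statements merged into one kernel-verified Lean document; each statement's English description precedes it below -/
import Mathlib

section
/- Let u_n denote the number of grand knight's paths of size n. Then u_0 = 1, u_1 = 2, u_n = 2u_{n-1} + 2u_{n-2} for all n ≥ 2, and for every n ≥ 0 one has the closed form u_n = Σ_{k=0}^{n+1} C(n+1, 2k+1)·3^k. -/
open Filter Topology

/-- A knight step: `N = (1,2)`, `Nb = (1,-2)`, `E = (2,1)`, `Eb = (2,-1)`. -/
inductive KStep : Type
  | N | Nb | E | Eb

/-- x-component of a step. -/
def KStep.dx : KStep → ℤ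
  | .N => 1
  | .Nb => 1
  | .E => 2
  | .Eb => 2

/-- y-component of a step. -/
def KStep.dy : KStep → ℤ
  | .N => 2
  | .Nb => -2
  | .E => 1
  | .Eb => -1

/-- The size of a path: the x-coordinate of its endpoint. -/
def pathSize (p : List KStep) : ℤ := (p.map KStep.dx).sum

/-- The altitude of a path: the y-coordinate of its endpoint. -/
def pathAlt (p : List KStep) : ℤ := (p.map KStep.dy).sum

/-- Zigzag condition: y-components of consecutive steps have opposite signs. -/
def IsZigzag (p : List KStep) : Prop :=
  List.Chain' (fun a b => a.dy * b.dy < 0) p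

deriving instance DecidableEq for KStep

instance : Fintype KStep := ⟨{.N, .Nb, .E, .Eb}, by intro x; cases x <;> simp⟩

lemma dx_pos (s : KStep) : 1 ≤ s.dx := by cases s <;> simp [KStep.dx]

lemma pathSize_nil : pathSize ([] : List KStep) = 0 := rfl

lemma pathSize_cons (s : KStep) (q : List KStep) : pathSize (s :: q) = s.dx + pathSize q := by
  simp [pathSize]

lemma length_le (p : List KStep) : (p.length : ℤ) ≤ pathSize p := by
  induction p with
  | nil => simp [pathSize]
  | cons s q ih =>
    rw [pathSize_cons]
    have := dx_pos s
    simp only [List.length_cons]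
    push_cast
    linarith

lemma pathSize_nonneg (p : List KStep) : 0 ≤ pathSize p :=
  le_trans (by positivity) (length_le p)

instance instFin (n : ℤ) : Finite {p : List KStep // pathSize p = n} := by
  rcases le_or_gt 0 n with h | h
  · have : {p : List KStep | pathSize p = n} ⊆ {l | l.length ≤ n.toNat} := by
      intro p hp
      simp only [Set.mem_setOf_eq] at *
      have := length_le p
      rw [hp] at this
      omega
    exact ((List.finite_length_le KStep n.toNat).subset this).to_subtype
  · have : IsEmpty {p : List KStep // pathSize p = n} := by
      constructor; rintro ⟨p, hp⟩
      have := pathSize_nonneg p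
      omega
    infer_instance

lemma pathSize_eq_zero {p : List KStep} (h : pathSize p = 0) : p = [] := by
  cases p with
  | nil => rfl
  | cons s q =>
    rw [pathSize_cons] at h
    have := dx_pos s; have := pathSize_nonneg q
    omega

instance : Unique {p : List KStep // pathSize p = ((0 : ℕ) : ℤ)} where
  default := ⟨[], rfl⟩
  uniq := by
    rintro ⟨p, hp⟩
    simp only [Nat.cast_zero] at hp
    exact Subtype.ext (pathSize_eq_zero hp)

lemma card0 : Nat.card {p : List KStep // pathSize p = ((0 : ℕ) : ℤ)} = 1 :=
  Nat.card_unique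

lemma size_one {p : List KStep} (h : pathSize p = 1) : p = [.N] ∨ p = [.Nb] := by
  cases p with
  | nil => simp [pathSize_nil] at h
  | cons s q =>
    rw [pathSize_cons] at h
    have h1 := dx_pos s
    have h2 := pathSize_nonneg q
    have hd : s.dx = 1 := by
      cases s <;> simp [KStep.dx] at * <;> omega
    have : pathSize q = 0 := by omega
    rw [pathSize_eq_zero this]
    cases s <;> simp [KStep.dx] at hd ⊢

lemma card1 : Nat.card {p : List KStep // pathSize p = ((1 : ℕ) : ℤ)} = 2 := by
  have hset : {p : List KStep | pathSize p = ((1 : ℕ) : ℤ)} = {[KStep.N], [KStep.Nb]} := by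
    ext p
    simp only [Set.mem_setOf_eq, Set.mem_insert_iff, Set.mem_singleton_iff, Nat.cast_one]
    constructor
    · exact size_one
    · rintro (rfl | rfl) <;> simp [pathSize, KStep.dx]
  have : Nat.card {p : List KStep // pathSize p = ((1 : ℕ) : ℤ)}
      = ({p : List KStep | pathSize p = ((1 : ℕ) : ℤ)} : Set (List KStep)).ncard := by
    exact Nat.card_coe_set_eq _
  rw [this, hset, Set.ncard_pair (by simp)]

def eRec (n : ℕ) : {p : List KStep // pathSize p = ((n + 2 : ℕ) : ℤ)} ≃
    ({q : List KStep // pathSize q = ((n + 1 : ℕ) : ℤ)} ⊕ {q : List KStep // pathSize q = ((n + 1 : ℕ) : ℤ)})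
    ⊕ ({q : List KStep // pathSize q = ((n : ℕ) : ℤ)} ⊕ {q : List KStep // pathSize q = ((n : ℕ) : ℤ)}) where
  toFun := fun ⟨p, h⟩ =>
    match p, h with
    | [], h => absurd h (by rw [pathSize_nil]; intro h; omega)
    | .N :: q, h => .inl (.inl ⟨q, by rw [pathSize_cons] at h; simp [KStep.dx] at h; push_cast; omega⟩)
    | .Nb :: q, h => .inl (.inr ⟨q, by rw [pathSize_cons] at h; simp [KStep.dx] at h; push_cast; omega⟩)
    | .E :: q, h => .inr (.inl ⟨q, by rw [pathSize_cons] at h; simp [KStep.dx] at h; push_cast; omega⟩)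
    | .Eb :: q, h => .inr (.inr ⟨q, by rw [pathSize_cons] at h; simp [KStep.dx] at h; push_cast; omega⟩)
  invFun := fun x =>
    match x with
    | .inl (.inl ⟨q, h⟩) => ⟨.N :: q, by rw [pathSize_cons, h]; simp [KStep.dx]; ring⟩
    | .inl (.inr ⟨q, h⟩) => ⟨.Nb :: q, by rw [pathSize_cons, h]; simp [KStep.dx]; ring⟩
    | .inr (.inl ⟨q, h⟩) => ⟨.E :: q, by rw [pathSize_cons, h]; simp [KStep.dx]; ring⟩
    | .inr (.inr ⟨q, h⟩) => ⟨.Eb :: q, by rw [pathSize_cons, h]; simp [KStep.dx]; ring⟩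
  left_inv := by
    rintro ⟨p, h⟩
    cases p with
    | nil => exact absurd h (by rw [pathSize_nil]; intro h; omega)
    | cons s q => cases s <;> rfl
  right_inv := by
    rintro (⟨q, h⟩ | ⟨q, h⟩) <;> rfl

lemma cardRec (n : ℕ) : Nat.card {p : List KStep // pathSize p = ((n + 2 : ℕ) : ℤ)} =
    2 * Nat.card {q : List KStep // pathSize q = ((n + 1 : ℕ) : ℤ)}
    + 2 * Nat.card {q : List KStep // pathSize q = ((n : ℕ) : ℤ)} := by
  rw [Nat.card_congr (eRec n), Nat.card_sum, Nat.card_sum, Nat.card_sum]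
  ring

def Afun (n : ℕ) : ℕ := ∑ k ∈ Finset.range (n+1), Nat.choose n (2*k) * 3^k
def Bfun (n : ℕ) : ℕ := ∑ k ∈ Finset.range (n+1), Nat.choose n (2*k+1) * 3^k

lemma B_succ (n : ℕ) : Bfun (n+1) = Afun n + Bfun n := by
  unfold Afun Bfun
  rw [Finset.sum_range_succ (fun k => Nat.choose (n+1) (2*k+1) * 3^k) (n+1),
      Nat.choose_eq_zero_of_lt (show n+1 < 2*(n+1)+1 by omega)]
  simp only [zero_mul, add_zero]
  rw [← Finset.sum_add_distrib]
  apply Finset.sum_congr rfl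
  intro k _
  rw [show 2*k+1 = (2*k)+1 from rfl, Nat.choose_succ_succ]
  ring

lemma A_succ (n : ℕ) : Afun (n+1) = Afun n + 3 * Bfun n := by
  unfold Afun Bfun
  rw [Finset.sum_range_succ' (fun k => Nat.choose (n+1) (2*k) * 3^k) (n+1),
      Finset.sum_range_succ' (fun k => Nat.choose n (2*k) * 3^k) n]
  simp only [mul_zero, Nat.choose_zero_right, pow_zero, mul_one]
  have key : ∀ k, Nat.choose (n+1) (2*(k+1)) * 3^(k+1)
      = Nat.choose n (2*k+1) * 3^k * 3 + Nat.choose n (2*(k+1)) * 3^(k+1) := by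
    intro k
    have h : 2*(k+1) = (2*k+1)+1 := by ring
    rw [h, Nat.choose_succ_succ]
    ring
  rw [Finset.sum_congr rfl (fun k _ => key k), Finset.sum_add_distrib,
      Finset.sum_range_succ (fun k => Nat.choose n (2*(k+1)) * 3^(k+1)) n,
      Nat.choose_eq_zero_of_lt (show n < 2*(n+1) by omega)]
  rw [← Finset.sum_mul]
  ring

lemma B_rec (n : ℕ) : Bfun (n+2) = 2 * Bfun (n+1) + 2 * Bfun n := by
  rw [show n+2 = (n+1)+1 from rfl, B_succ (n+1), A_succ n, B_succ n]
  ring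

lemma card_eq_B (n : ℕ) :
    Nat.card {p : List KStep // pathSize p = (n : ℤ)} = Bfun (n+1) := by
  induction n using Nat.twoStepInduction with
  | zero => rw [card0]; decide
  | one => rw [card1]; decide
  | more n ih1 ih2 => rw [cardRec n, ih1, ih2]; exact (B_rec (n+1)).symm

theorem stmt0 (u : ℕ → ℕ)
    (hu : ∀ n : ℕ, u n = Nat.card {p : List KStep // pathSize p = (n : ℤ)}) :
    u 0 = 1 ∧ u 1 = 2 ∧
    (∀ n : ℕ, 2 ≤ n → u n = 2 * u (n - 1) + 2 * u (n - 2)) ∧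
    (∀ n : ℕ, u n = ∑ k ∈ Finset.range (n + 2), Nat.choose (n + 1) (2 * k + 1) * 3 ^ k) := by
  refine ⟨by rw [hu 0]; exact card0, by rw [hu 1]; exact card1, ?_, ?_⟩
  · intro n hn
    obtain ⟨m, rfl⟩ : ∃ m, n = m + 2 := ⟨n - 2, by omega⟩
    rw [hu (m+2), show m+2-1 = m+1 from rfl, show m+2-2 = m from rfl, hu (m+1), hu m]
    exact cardRec m
  · intro n
    rw [hu n, card_eq_B n]
    rfl
end

section
/- For all natural numbers n ≤ m, |C_{m,n}| = |C_{n,m}| = Σ_{i=0}^{n−⌈m/2⌉} C(n−i, i)·C(n−i, m−n+i), where the sum is empty (and the cardinality is 0) when n < ⌈m/2⌉. -/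
open Filter Topology

/-- `X` is a composition of `n` with all parts in `{1,2}`. -/
def IsComp12 (x : List ℕ) (n : ℕ) : Prop :=
  (∀ a ∈ x, a = 1 ∨ a = 2) ∧ x.sum = n

/-- The number of pairs `(X,Y)` of compositions of `n` and `m` with parts in `{1,2}`
having the same number of parts. -/
noncomputable def compPairCount (n m : ℕ) : ℕ :=
  Nat.card {xy : List ℕ × List ℕ //
    IsComp12 xy.1 n ∧ IsComp12 xy.2 m ∧ xy.1.length = xy.2.length}

def comps : ℕ → List (List ℕ)
  | 0 => [[]]
  | 1 => [[1]]
  | (n+2) => ((comps (n+1)).map (fun x => 1 :: x)) ++ ((comps n).map (fun x => 2 :: x))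

theorem mem_comps : ∀ n x, x ∈ comps n ↔ IsComp12 x n
  | 0, x => by
    simp only [comps, List.mem_singleton, IsComp12]
    constructor
    · rintro rfl; exact ⟨by simp, rfl⟩
    · rintro ⟨h1, h2⟩
      cases x with
      | nil => rfl
      | cons a xs =>
        rcases h1 a (by simp) with rfl | rfl <;> simp at h2
  | 1, x => by
    simp only [comps, List.mem_singleton, IsComp12]
    constructor
    · rintro rfl
      refine ⟨?_, by simp⟩
      intro a ha; simp at ha; omega
    · rintro ⟨h1, h2⟩
      cases x with
      | nil => simp at h2
      | cons a xs =>
        rcases h1 a (by simp) with rfl | rfl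
        · simp only [List.sum_cons] at h2
          have hxs : xs = [] := by
            cases xs with
            | nil => rfl
            | cons b ys =>
              rcases h1 b (by simp) with rfl | rfl <;> simp at h2
          subst hxs; rfl
        · simp at h2; omega
  | (n+2), x => by
    have ih1 := mem_comps (n+1)
    have ih0 := mem_comps n
    simp only [comps, List.mem_append, List.mem_map]
    constructor
    · rintro (⟨y, hy, rfl⟩ | ⟨y, hy, rfl⟩)
      · obtain ⟨h1, h2⟩ := (ih1 y).1 hy
        refine ⟨?_, by simp [h2]; omega⟩
        intro a ha; simp at ha
        rcases ha with rfl | ha; · left; rfl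
        · exact h1 a ha
      · obtain ⟨h1, h2⟩ := (ih0 y).1 hy
        refine ⟨?_, by simp [h2]; omega⟩
        intro a ha; simp at ha
        rcases ha with rfl | ha; · right; rfl
        · exact h1 a ha
    · rintro ⟨h1, h2⟩
      cases x with
      | nil => simp at h2
      | cons a xs =>
        simp only [List.sum_cons] at h2
        have hxs : ∀ a ∈ xs, a = 1 ∨ a = 2 := fun b hb => h1 b (by simp [hb])
        rcases h1 a (by simp) with rfl | rfl
        · left; exact ⟨xs, (ih1 xs).2 ⟨hxs, by omega⟩, rfl⟩
        · right; exact ⟨xs, (ih0 xs).2 ⟨hxs, by omega⟩, rfl⟩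

theorem nodup_comps : ∀ n, (comps n).Nodup
  | 0 => by simp [comps]
  | 1 => by simp [comps]
  | (n+2) => by
    have ih1 := nodup_comps (n+1)
    have ih0 := nodup_comps n
    simp only [comps]
    refine List.Nodup.append ?_ ?_ ?_
    · exact ih1.map (fun a b hab => by simpa using hab)
    · exact ih0.map (fun a b hab => by simpa using hab)
    · intro x hx hy
      simp only [List.mem_map] at hx hy
      obtain ⟨y, _, rfl⟩ := hx
      obtain ⟨z, _, hz⟩ := hy
      simp at hz

theorem cnt_eq : ∀ n k, (comps n).countP (fun x => decide (x.length = k)) =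
    if k ≤ n then k.choose (n - k) else 0
  | 0, k => by
    cases k with
    | zero => simp [comps]
    | succ j => simp [comps, Nat.choose_eq_zero_of_lt]
  | 1, k => by
    match k with
    | 0 => simp [comps]
    | 1 => simp [comps]
    | (j+2) => simp [comps]
  | (n+2), k => by
    have ih1 := cnt_eq (n+1)
    have ih0 := cnt_eq n
    simp only [comps, List.countP_append, List.countP_map]
    cases k with
    | zero =>
      have e1 : ((fun x => decide (x.length = 0)) ∘ (fun x => (1:ℕ) :: x)) = fun x => false := by
        funext x; simp
      have e2 : ((fun x => decide (x.length = 0)) ∘ (fun x => (2:ℕ) :: x)) = fun x => false := by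
        funext x; simp
      rw [e1, e2]
      simp [Nat.choose_eq_zero_of_lt]
    | succ j =>
      have e1 : ((fun x => decide (x.length = j+1)) ∘ (fun x => (1:ℕ) :: x)) =
          fun x => decide (x.length = j) := by funext x; simp
      have e2 : ((fun x => decide (x.length = j+1)) ∘ (fun x => (2:ℕ) :: x)) =
          fun x => decide (x.length = j) := by funext x; simp
      rw [e1, e2, ih1 j, ih0 j]
      rcases Nat.lt_or_ge j (n+1) with hj | hj
      · have hj' : j ≤ n := by omega
        rw [if_pos (by omega), if_pos hj', if_pos (by omega)]
        have h1 : n + 1 - j = (n - j) + 1 := by omega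
        have h2 : n + 2 - (j+1) = (n - j) + 1 := by omega
        rw [h1, h2, Nat.choose_succ_succ']
        omega
      · rcases Nat.eq_or_lt_of_le hj with rfl | hj2
        · rw [if_pos le_rfl, if_neg (by omega), if_pos (by omega)]
          simp
        · rw [if_neg (by omega), if_neg (by omega), if_neg (by omega)]

theorem length_le_of_comp {x : List ℕ} {n : ℕ} (h : IsComp12 x n) : x.length ≤ n := by
  obtain ⟨h1, h2⟩ := h
  subst h2
  induction x with
  | nil => simp
  | cons a xs ih =>
    have := h1 a (by simp)
    have hxs := ih (fun b hb => h1 b (by simp [hb]))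
    simp only [List.length_cons, List.sum_cons]
    omega

theorem cnt_finset (n k : ℕ) :
    ((comps n).toFinset.filter (fun x => x.length = k)).card =
    (comps n).countP (fun x => decide (x.length = k)) := by
  classical
  rw [List.countP_eq_length_filter]
  rw [show ((comps n).toFinset.filter (fun x => x.length = k)) =
      ((comps n).filter (fun x => decide (x.length = k))).toFinset by
    rw [List.toFinset_filter]
    congr 1
    funext x
    simp]
  exact List.toFinset_card_of_nodup ((nodup_comps n).filter _)

theorem pairCount_eq (n m : ℕ) :
    Nat.card {xy : List ℕ × List ℕ //
      IsComp12 xy.1 n ∧ IsComp12 xy.2 m ∧ xy.1.length = xy.2.length} =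
    ∑ k ∈ Finset.range (n+1),
      ((comps n).countP (fun x => decide (x.length = k))) *
      ((comps m).countP (fun x => decide (x.length = k))) := by
  classical
  set T : Finset (List ℕ × List ℕ) :=
    ((comps n).toFinset ×ˢ (comps m).toFinset).filter
      (fun xy => xy.1.length = xy.2.length) with hT
  have hset : {xy : List ℕ × List ℕ |
      IsComp12 xy.1 n ∧ IsComp12 xy.2 m ∧ xy.1.length = xy.2.length} = ↑T := by
    ext ⟨x, y⟩
    simp [hT, mem_comps, and_assoc]
  have h1 : Nat.card {xy : List ℕ × List ℕ //
      IsComp12 xy.1 n ∧ IsComp12 xy.2 m ∧ xy.1.length = xy.2.length} = T.card := by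
    rw [← Set.ncard_coe_finset, ← hset, ← Nat.card_coe_set_eq]
    rfl
  rw [h1]
  have hbi : T = (Finset.range (n+1)).biUnion (fun k =>
      ((comps n).toFinset.filter (fun x => x.length = k)) ×ˢ
      ((comps m).toFinset.filter (fun x => x.length = k))) := by
    ext ⟨x, y⟩
    simp only [hT, Finset.mem_filter, Finset.mem_product, Finset.mem_biUnion, Finset.mem_range,
      List.mem_toFinset]
    constructor
    · rintro ⟨⟨hx, hy⟩, hl⟩
      refine ⟨x.length, ?_, ⟨hx, rfl⟩, ⟨hy, hl.symm⟩⟩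
      have := length_le_of_comp ((mem_comps n x).1 hx)
      omega
    · rintro ⟨k, hk, ⟨hx, hx2⟩, ⟨hy, hy2⟩⟩
      exact ⟨⟨hx, hy⟩, by omega⟩
  rw [hbi, Finset.card_biUnion]
  · refine Finset.sum_congr rfl fun k _ => ?_
    rw [Finset.card_product, cnt_finset, cnt_finset]
  · intro a _ b _ hab
    simp only [Finset.disjoint_left]
    rintro ⟨x, y⟩ hx hy
    simp only [Finset.mem_product, Finset.mem_filter] at hx hy
    exact hab (by omega)


theorem stmt6 (n m : ℕ) (h : n ≤ m) :
    compPairCount m n = compPairCount n m ∧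
    compPairCount n m =
      ∑ i ∈ Finset.range (((n : ℤ) - ((m : ℤ) + 1) / 2 + 1).toNat),
        Nat.choose (n - i) i * Nat.choose (n - i) (m - n + i) := by
  constructor
  · exact Nat.card_congr
      ⟨fun p => ⟨(p.1.2, p.1.1), p.2.2.1, p.2.1, p.2.2.2.symm⟩,
       fun p => ⟨(p.1.2, p.1.1), p.2.2.1, p.2.1, p.2.2.2.symm⟩,
       fun p => rfl, fun p => rfl⟩
  · rw [compPairCount, pairCount_eq n m]
    have hq : (((n : ℤ) - ((m : ℤ) + 1) / 2 + 1).toNat) = n + 1 - (m+1)/2 := by omega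
    rw [hq]
    set t := n + 1 - (m+1)/2 with ht
    calc ∑ k ∈ Finset.range (n+1),
          ((comps n).countP (fun x => decide (x.length = k))) *
          ((comps m).countP (fun x => decide (x.length = k)))
        = ∑ k ∈ Finset.range (n+1), k.choose (n-k) * k.choose (m-k) := by
          refine Finset.sum_congr rfl fun k hk => ?_
          simp only [Finset.mem_range] at hk
          rw [cnt_eq, cnt_eq, if_pos (by omega), if_pos (by omega)]
      _ = ∑ j ∈ Finset.range (n+1),
            (n-j).choose (n-(n-j)) * (n-j).choose (m-(n-j)) := by
          rw [← Finset.sum_range_reflect (fun k => k.choose (n-k) * k.choose (m-k)) (n+1)]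
          simp only [Nat.add_sub_cancel]
      _ = ∑ i ∈ Finset.range t,
            (n-i).choose (n-(n-i)) * (n-i).choose (m-(n-i)) := by
          refine (Finset.sum_subset (Finset.range_subset_range.2 (by omega)) ?_).symm
          intro i hi hni
          simp only [Finset.mem_range] at hi hni
          rw [Nat.choose_eq_zero_of_lt (show n - i < m - (n-i) by omega), Nat.mul_zero]
      _ = ∑ i ∈ Finset.range t, (n-i).choose i * (n-i).choose (m-n+i) := by
          refine Finset.sum_congr rfl fun i hi => ?_
          simp only [Finset.mem_range] at hi
          rw [show n - (n-i) = i by omega, show m - (n-i) = m - n + i by omega]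
end

section
/- Let n ∈ ℕ and k ∈ ℤ with n ≡ k (mod 2), |k| ≤ n and (n,k) ≠ (0,0). Then |Z_{n,k}| = 2·Σ_{i=0}^{(n−|k|)/2} C((n−|k|)/2 − i, i)·C((n−|k|)/2 − i, |k| + i). -/
open Filter Topology

namespace ZZ

def posStep : Bool → KStep | true => .N | false => .E
def negStep : Bool → KStep | true => .Nb | false => .Eb

def decP : List (Bool × Bool) → List KStep
  | [] => []
  | (x, y) :: l => posStep x :: negStep y :: decP l

@[simp] lemma posStep_dy_pos (x : Bool) : 0 < (posStep x).dy := by cases x <;> decide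
@[simp] lemma negStep_dy_neg (y : Bool) : (negStep y).dy < 0 := by cases y <;> decide

def bx : Bool × Bool → ℤ := fun b => (posStep b.1).dx + (negStep b.2).dx
def by' : Bool × Bool → ℤ := fun b => (posStep b.1).dy + (negStep b.2).dy

lemma size_decP (l : List (Bool × Bool)) : pathSize (decP l) = (l.map bx).sum := by
  induction l with
  | nil => rfl
  | cons b l ih =>
    obtain ⟨x, y⟩ := b
    simp [decP, pathSize, bx] at *
    rw [ih]; ring

lemma alt_decP (l : List (Bool × Bool)) : pathAlt (decP l) = (l.map by').sum := by
  induction l with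
  | nil => rfl
  | cons b l ih =>
    obtain ⟨x, y⟩ := b
    simp [decP, pathAlt, by'] at *
    rw [ih]; ring

lemma zig_decP (l : List (Bool × Bool)) : IsZigzag (decP l) ∧
    ∀ y : Bool, IsZigzag (negStep y :: decP l) := by
  induction l with
  | nil => constructor; · exact List.isChain_nil
           · intro y; exact List.isChain_singleton _
  | cons b l ih =>
    obtain ⟨x, y⟩ := b
    have h1 : IsZigzag (negStep y :: decP l) := ih.2 y
    have hz : IsZigzag (posStep x :: negStep y :: decP l) := by
      refine List.IsChain.cons_cons ?_ h1
      have := posStep_dy_pos x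
      have := negStep_dy_neg y
      nlinarith
    refine ⟨hz, fun y' => ?_⟩
    refine List.IsChain.cons_cons ?_ hz
    have := posStep_dy_pos x
    have := negStep_dy_neg y'
    nlinarith

lemma decP_inj : Function.Injective decP := by
  intro l1 l2 h
  induction l1 generalizing l2 with
  | nil => cases l2 with
    | nil => rfl
    | cons b l => obtain ⟨x, y⟩ := b; simp [decP] at h
  | cons b l ih =>
    obtain ⟨x, y⟩ := b
    cases l2 with
    | nil => simp [decP] at h
    | cons b2 l2 =>
      obtain ⟨x2, y2⟩ := b2
      simp [decP] at h
      obtain ⟨h1, h2, h3⟩ := h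
      have hx : x = x2 := by cases x <;> cases x2 <;> simp_all [posStep]
      have hy : y = y2 := by cases y <;> cases y2 <;> simp_all [negStep]
      rw [hx, hy, ih h3]


def negK : KStep → KStep | .N => .Nb | .Nb => .N | .E => .Eb | .Eb => .E

@[simp] lemma negK_dx (s : KStep) : (negK s).dx = s.dx := by cases s <;> rfl
@[simp] lemma negK_dy (s : KStep) : (negK s).dy = -s.dy := by cases s <;> rfl
@[simp] lemma negK_negK (s : KStep) : negK (negK s) = s := by cases s <;> rfl

lemma size_mapneg (p : List KStep) : pathSize (p.map negK) = pathSize p := by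
  simp [pathSize, List.map_map, Function.comp_def]

lemma alt_mapneg (p : List KStep) : pathAlt (p.map negK) = -pathAlt p := by
  induction p with
  | nil => simp [pathAlt]
  | cons s p ih => simp [pathAlt] at *; rw [ih]; ring

lemma zig_mapneg {p : List KStep} (h : IsZigzag p) : IsZigzag (p.map negK) := by
  unfold IsZigzag at *
  rw [show List.Chain' _ (List.map negK p) ↔ _ from List.isChain_map negK]
  refine h.imp ?_
  intro a b hab
  simp only [negK_dy]
  nlinarith

lemma mapneg_inj : Function.Injective (List.map negK) := by
  intro a b h
  have := congrArg (List.map negK) h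
  simpa [List.map_map, Function.comp_def] using this

/-- each step has dx + dy odd, so size + alt ≡ length mod 2 -/
lemma size_add_alt (p : List KStep) : ∃ t : ℤ, pathSize p + pathAlt p = 2 * t + p.length := by
  induction p with
  | nil => exact ⟨0, by simp [pathSize, pathAlt]⟩
  | cons s p ih =>
    obtain ⟨t, ht⟩ := ih
    cases s
    · exact ⟨t + 1, by simp [pathSize, pathAlt, KStep.dx, KStep.dy] at *; push_cast; linarith⟩
    · exact ⟨t - 1, by simp [pathSize, pathAlt, KStep.dx, KStep.dy] at *; push_cast; linarith⟩
    · exact ⟨t + 1, by simp [pathSize, pathAlt, KStep.dx, KStep.dy] at *; push_cast; linarith⟩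
    · exact ⟨t, by simp [pathSize, pathAlt, KStep.dx, KStep.dy] at *; push_cast; linarith⟩

lemma dy_ne_zero (s : KStep) : s.dy ≠ 0 := by cases s <;> decide

/-- structural lemma: zigzag path of even length starting positive is decP of something -/
lemma exists_decP : ∀ p : List KStep, IsZigzag p → Even p.length →
    (∀ s, p.head? = some s → 0 < s.dy) → ∃ l, p = decP l
  | [] => fun _ _ _ => ⟨[], rfl⟩
  | [a] => fun _ h _ => by simp [Nat.even_iff] at h
  | a :: b :: rest => fun hz he hh => by
    have ha : 0 < a.dy := hh a rfl
    have hab : a.dy * b.dy < 0 := (List.isChain_cons_cons.mp hz).1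
    have hb : b.dy < 0 := by nlinarith
    have hz2 : IsZigzag (b :: rest) := (List.isChain_cons_cons.mp hz).2
    have hzr : IsZigzag rest := hz2.tail
    have her : Even rest.length := by
      simp only [List.length_cons, Nat.even_iff] at he ⊢
      omega
    have hhr : ∀ s, rest.head? = some s → 0 < s.dy := by
      intro s hs
      cases rest with
      | nil => simp at hs
      | cons c r =>
        have hcs : s = c := by simpa using hs.symm
        subst hcs
        have hbc : b.dy * s.dy < 0 := (List.isChain_cons_cons.mp hz2).1
        nlinarith
    obtain ⟨l, hl⟩ := exists_decP rest hzr her hhr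
    have hax : ∃ x, a = posStep x := by
      cases a
      · exact ⟨true, rfl⟩
      · simp [KStep.dy] at ha
      · exact ⟨false, rfl⟩
      · simp [KStep.dy] at ha
    have hby : ∃ y, b = negStep y := by
      cases b
      · simp [KStep.dy] at hb
      · exact ⟨true, rfl⟩
      · simp [KStep.dy] at hb
      · exact ⟨false, rfl⟩
    obtain ⟨x, rfl⟩ := hax
    obtain ⟨y, rfl⟩ := hby
    exact ⟨(x, y) :: l, by rw [hl]; rfl⟩


/-- counting lemma: lists satisfying P, decomposed by length -/
lemma card_list_eq_sum {A : Type} [Finite A] (P : List A → Prop) (N : ℕ)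
    (hP : ∀ l, P l → l.length < N) :
    Nat.card {l : List A // P l} =
      ∑ p ∈ Finset.range N, Nat.card {f : Fin p → A // P (List.ofFn f)} := by
  classical
  haveI : ∀ p : ℕ, Fintype {f : Fin p → A // P (List.ofFn f)} := fun p => Fintype.ofFinite _
  have key : Nat.card (Σ p : Fin N, {f : Fin (p : ℕ) → A // P (List.ofFn f)}) =
      Nat.card {l : List A // P l} := by
    apply Nat.card_eq_of_bijective (fun x => ⟨List.ofFn x.2.1, x.2.2⟩)
    constructor
    · rintro ⟨⟨p, hp⟩, f, hf⟩ ⟨⟨q, hq⟩, g, hg⟩ h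
      simp only [Subtype.mk.injEq] at h
      have hpq : p = q := by
        have := congrArg List.length h; simpa using this
      subst hpq
      have hfg : f = g := by
        apply List.ofFn_injective h
      subst hfg
      rfl
    · rintro ⟨l, hl⟩
      exact ⟨⟨⟨l.length, hP l hl⟩, l.get, by rw [List.ofFn_get]; exact hl⟩,
        Subtype.ext (List.ofFn_get l)⟩
  rw [← key, Nat.card_eq_fintype_card, Fintype.card_sigma]
  rw [← Fin.sum_univ_eq_sum_range (fun p => Nat.card {f : Fin p → A // P (List.ofFn f)}) N]
  congr 1
  ext p
  rw [Nat.card_eq_fintype_card]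

def cnt {p : ℕ} (g : Fin p → Bool) : ℕ := (Finset.univ.filter (fun i => g i = true)).card

lemma card_cnt (p t : ℕ) : Nat.card {g : Fin p → Bool // cnt g = t} = p.choose t := by
  classical
  have e : {g : Fin p → Bool // cnt g = t} ≃ {s : Finset (Fin p) // s.card = t} := by
    refine ⟨fun g => ⟨Finset.univ.filter (fun i => g.1 i = true), g.2⟩,
      fun s => ⟨fun i => decide (i ∈ s.1), ?_⟩, ?_, ?_⟩
    · have : (Finset.univ.filter (fun i => decide (i ∈ s.1) = true)) = s.1 := by
        ext i; simp
      simp only [cnt, this]; exact s.2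
    · rintro ⟨g, hg⟩
      ext i
      simp
    · rintro ⟨s, hs⟩
      ext i
      simp
  rw [Nat.card_congr e, Nat.card_eq_fintype_card, Fintype.card_finset_len, Fintype.card_fin]

lemma sum_bool1 {p : ℕ} (g : Fin p → Bool) :
    ∑ i, (if g i then (1 : ℤ) else 2) = 2 * p - cnt g := by
  classical
  have h1 : ∀ i, (if g i then (1 : ℤ) else 2) = 2 - (if g i = true then (1:ℤ) else 0) := by
    intro i; by_cases h : g i <;> simp [h]
  rw [Finset.sum_congr rfl (fun i _ => h1 i), Finset.sum_sub_distrib, Finset.sum_boole]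
  simp [cnt, mul_comm]

lemma sum_bool2 {p : ℕ} (g : Fin p → Bool) :
    ∑ i, (if g i then (2 : ℤ) else 1) = p + cnt g := by
  classical
  have h1 : ∀ i, (if g i then (2 : ℤ) else 1) = 1 + (if g i = true then (1:ℤ) else 0) := by
    intro i; by_cases h : g i <;> simp [h]
  rw [Finset.sum_congr rfl (fun i _ => h1 i), Finset.sum_add_distrib, Finset.sum_boole]
  simp [cnt]

lemma bx_eq (x y : Bool) : bx (x, y) = (if x then (1:ℤ) else 2) + (if y then (1:ℤ) else 2) := by
  cases x <;> cases y <;> rfl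

lemma by'_eq (x y : Bool) : by' (x, y) = (if x then (2:ℤ) else 1) - (if y then (2:ℤ) else 1) := by
  cases x <;> cases y <;> rfl


lemma fiber_card (m k' p : ℕ) :
    Nat.card {f : Fin p → Bool × Bool //
        ((List.ofFn f).map bx).sum = ((2 * m + k' : ℕ) : ℤ) ∧
        ((List.ofFn f).map by').sum = ((k' : ℕ) : ℤ)} =
      if m + k' ≤ 2 * p then p.choose (2 * p - m) * p.choose (2 * p - m - k') else 0 := by
  classical
  have e1 : {f : Fin p → Bool × Bool //
        ((List.ofFn f).map bx).sum = ((2 * m + k' : ℕ) : ℤ) ∧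
        ((List.ofFn f).map by').sum = ((k' : ℕ) : ℤ)} ≃
      {gg : (Fin p → Bool) × (Fin p → Bool) //
        4 * (p : ℤ) - (cnt gg.1 : ℤ) - (cnt gg.2 : ℤ) = 2 * m + k' ∧
        (cnt gg.1 : ℤ) - (cnt gg.2 : ℤ) = (k' : ℤ)} := by
    refine Equiv.subtypeEquiv (Equiv.arrowProdEquivProdArrow (Fin p) (fun _ => Bool) (fun _ => Bool)) ?_
    intro f
    have hx : ((List.ofFn f).map bx).sum =
        (∑ i, (if (f i).1 then (1:ℤ) else 2)) + ∑ i, (if (f i).2 then (1:ℤ) else 2) := by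
      rw [List.map_ofFn, List.sum_ofFn, ← Finset.sum_add_distrib]
      refine Finset.sum_congr rfl fun i _ => ?_
      rw [Function.comp_apply, ← bx_eq]
    have hy : ((List.ofFn f).map by').sum =
        (∑ i, (if (f i).1 then (2:ℤ) else 1)) - ∑ i, (if (f i).2 then (2:ℤ) else 1) := by
      rw [List.map_ofFn, List.sum_ofFn, ← Finset.sum_sub_distrib]
      refine Finset.sum_congr rfl fun i _ => ?_
      rw [Function.comp_apply, ← by'_eq]
    rw [hx, hy, sum_bool1, sum_bool1, sum_bool2, sum_bool2]
    simp only [Equiv.arrowProdEquivProdArrow, Equiv.coe_fn_mk]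
    constructor
    · rintro ⟨h1, h2⟩
      constructor <;> push_cast at * <;> linarith
    · rintro ⟨h1, h2⟩
      constructor <;> push_cast at * <;> linarith
  rw [Nat.card_congr e1]
  by_cases hle : m + k' ≤ 2 * p
  · rw [if_pos hle]
    have e2 : {gg : (Fin p → Bool) × (Fin p → Bool) //
        4 * (p : ℤ) - (cnt gg.1 : ℤ) - (cnt gg.2 : ℤ) = 2 * m + k' ∧
        (cnt gg.1 : ℤ) - (cnt gg.2 : ℤ) = (k' : ℤ)} ≃
        {gg : (Fin p → Bool) × (Fin p → Bool) //
          cnt gg.1 = 2 * p - m ∧ cnt gg.2 = 2 * p - m - k'} := by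
      refine Equiv.subtypeEquivRight fun gg => ?_
      constructor
      · rintro ⟨h1, h2⟩
        have hc1 : (cnt gg.1 : ℤ) = 2 * p - m := by linarith
        have hc2 : (cnt gg.2 : ℤ) = 2 * p - m - k' := by linarith
        omega
      · rintro ⟨h1, h2⟩
        omega
    rw [Nat.card_congr e2, Nat.card_congr (Equiv.subtypeProdEquivProd (p := fun g : Fin p → Bool => cnt g = 2 * p - m) (q := fun g : Fin p → Bool => cnt g = 2 * p - m - k')), Nat.card_prod,
      card_cnt, card_cnt]
  · rw [if_neg hle]
    have : IsEmpty {gg : (Fin p → Bool) × (Fin p → Bool) //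
        4 * (p : ℤ) - (cnt gg.1 : ℤ) - (cnt gg.2 : ℤ) = 2 * m + k' ∧
        (cnt gg.1 : ℤ) - (cnt gg.2 : ℤ) = (k' : ℤ)} := by
      refine ⟨fun gg => ?_⟩
      obtain ⟨gg, h1, h2⟩ := gg
      omega
    exact Nat.card_of_isEmpty


lemma bx_ge (b : Bool × Bool) : (2:ℤ) ≤ bx b := by
  obtain ⟨x, y⟩ := b; cases x <;> cases y <;> decide

lemma sum_bx_ge (l : List (Bool × Bool)) : 2 * (l.length : ℤ) ≤ (l.map bx).sum := by
  induction l with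
  | nil => simp
  | cons b l ih =>
    have := bx_ge b
    simp only [List.map_cons, List.sum_cons, List.length_cons]
    push_cast
    linarith

lemma card_T (n m k' : ℕ) (hm : n = 2 * m + k') :
    Nat.card {l : List (Bool × Bool) //
        (l.map bx).sum = (n : ℤ) ∧ (l.map by').sum = ((k' : ℕ) : ℤ)} =
      ∑ i ∈ Finset.range (m + 1), (m - i).choose i * (m - i).choose (k' + i) := by
  have hbound : ∀ l : List (Bool × Bool),
      ((l.map bx).sum = (n : ℤ) ∧ (l.map by').sum = ((k' : ℕ) : ℤ)) → l.length < n + 1 := by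
    intro l hl
    have := sum_bx_ge l
    rw [hl.1] at this
    omega
  rw [card_list_eq_sum _ (n + 1) hbound]
  subst hm
  have hfib : ∀ p : ℕ, Nat.card {f : Fin p → Bool × Bool //
      ((List.ofFn f).map bx).sum = ((2 * m + k' : ℕ) : ℤ) ∧
      ((List.ofFn f).map by').sum = ((k' : ℕ) : ℤ)} =
      if m + k' ≤ 2 * p then p.choose (2 * p - m) * p.choose (2 * p - m - k') else 0 :=
    fun p => fiber_card m k' p
  rw [Finset.sum_congr rfl (fun p _ => hfib p)]
  set gval : ℕ → ℕ := fun p =>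
    if m + k' ≤ 2 * p then p.choose (2 * p - m) * p.choose (2 * p - m - k') else 0 with hgval
  have hzero : ∀ p, m < p → gval p = 0 := by
    intro p hp
    rw [hgval]
    by_cases h : m + k' ≤ 2 * p
    · simp only [if_pos h]
      rw [Nat.choose_eq_zero_of_lt (by omega)]
      ring
    · simp only [if_neg h]
  have hstep : ∑ p ∈ Finset.range (2 * m + k' + 1), gval p = ∑ p ∈ Finset.range (m + 1), gval p := by
    symm
    apply Finset.sum_subset
    · intro x hx
      simp only [Finset.mem_range] at *
      omega
    · intro x _ hx
      simp only [Finset.mem_range] at hx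
      exact hzero x (by omega)
  rw [hstep, ← Finset.sum_range_reflect gval (m + 1)]
  refine Finset.sum_congr rfl fun i hi => ?_
  simp only [Finset.mem_range] at hi
  have hi' : i ≤ m := by omega
  have hidx : m + 1 - 1 - i = m - i := by omega
  rw [hidx, hgval]
  by_cases hc : m + k' ≤ 2 * (m - i)
  · simp only [if_pos hc]
    have h1 : 2 * (m - i) - m = (m - i) - i := by omega
    have h2 : 2 * (m - i) - m - k' = (m - i) - (k' + i) := by omega
    rw [h2, h1, Nat.choose_symm (by omega), Nat.choose_symm (by omega)]
  · simp only [if_neg hc]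
    rw [Nat.choose_eq_zero_of_lt (show m - i < k' + i by omega)]
    ring

lemma bx_swap (b : Bool × Bool) : bx b.swap = bx b := by
  obtain ⟨x, y⟩ := b; cases x <;> cases y <;> decide

lemma by'_swap (b : Bool × Bool) : by' b.swap = -by' b := by
  obtain ⟨x, y⟩ := b; cases x <;> cases y <;> decide

lemma sum_bx_swap (l : List (Bool × Bool)) :
    ((l.map Prod.swap).map bx).sum = (l.map bx).sum := by
  rw [List.map_map]
  congr 1
  exact List.map_congr_left fun b _ => bx_swap b

lemma sum_by'_swap (l : List (Bool × Bool)) :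
    ((l.map Prod.swap).map by').sum = -(l.map by').sum := by
  induction l with
  | nil => simp
  | cons b l ih =>
    simp only [List.map_cons, List.sum_cons, by'_swap]
    rw [ih]
    ring

def swapT (n : ℕ) (j : ℤ) :
    {l : List (Bool × Bool) // (l.map bx).sum = (n : ℤ) ∧ (l.map by').sum = j} ≃
    {l : List (Bool × Bool) // (l.map bx).sum = (n : ℤ) ∧ (l.map by').sum = -j} where
  toFun l := ⟨l.1.map Prod.swap, by rw [sum_bx_swap, sum_by'_swap, l.2.1, l.2.2]; exact ⟨rfl, rfl⟩⟩
  invFun l := ⟨l.1.map Prod.swap, by rw [sum_bx_swap, sum_by'_swap, l.2.1, l.2.2]; exact ⟨rfl, neg_neg j⟩⟩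
  left_inv := by rintro ⟨l, h⟩; ext : 1; simp [List.map_map]
  right_inv := by rintro ⟨l, h⟩; ext : 1; simp [List.map_map]


lemma card_Z (n : ℕ) (k : ℤ) (hpar : (n : ℤ) % 2 = k % 2) (hne : ¬(n = 0 ∧ k = 0)) :
    Nat.card {p : List KStep // pathSize p = (n : ℤ) ∧ pathAlt p = k ∧ IsZigzag p} =
      Nat.card {l : List (Bool × Bool) // (l.map bx).sum = (n : ℤ) ∧ (l.map by').sum = k} +
      Nat.card {l : List (Bool × Bool) // (l.map bx).sum = (n : ℤ) ∧ (l.map by').sum = -k} := by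
  classical
  haveI h1 : Finite {l : List (Bool × Bool) // (l.map bx).sum = (n : ℤ) ∧ (l.map by').sum = k} := by
    refine Set.Finite.to_subtype (Set.Finite.subset (List.finite_length_le (Bool × Bool) n) ?_)
    intro l hl
    have := sum_bx_ge l
    rw [hl.1] at this
    simp only [Set.mem_setOf_eq]
    omega
  haveI h2 : Finite {l : List (Bool × Bool) // (l.map bx).sum = (n : ℤ) ∧ (l.map by').sum = -k} := by
    refine Set.Finite.to_subtype (Set.Finite.subset (List.finite_length_le (Bool × Bool) n) ?_)
    intro l hl
    have := sum_bx_ge l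
    rw [hl.1] at this
    simp only [Set.mem_setOf_eq]
    omega
  rw [← Nat.card_sum]
  symm
  apply Nat.card_eq_of_bijective (fun x => match x with
    | Sum.inl l => ⟨decP l.1, by rw [size_decP]; exact l.2.1, by rw [alt_decP]; exact l.2.2,
        (zig_decP l.1).1⟩
    | Sum.inr l => ⟨(decP l.1).map negK, by rw [size_mapneg, size_decP]; exact l.2.1,
        by rw [alt_mapneg, alt_decP, l.2.2]; ring, zig_mapneg (zig_decP l.1).1⟩)
  constructor
  · -- injective
    have hne1 : ∀ l : List (Bool × Bool),
        ((l.map bx).sum = (n : ℤ) ∧ (l.map by').sum = k) → l ≠ [] := by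
      rintro l hl rfl
      simp only [List.map_nil, List.sum_nil] at hl
      exact hne ⟨by exact_mod_cast hl.1.symm, hl.2.symm⟩
    have hne2 : ∀ l : List (Bool × Bool),
        ((l.map bx).sum = (n : ℤ) ∧ (l.map by').sum = -k) → l ≠ [] := by
      rintro l hl rfl
      simp only [List.map_nil, List.sum_nil] at hl
      exact hne ⟨by exact_mod_cast hl.1.symm, by linarith [hl.2]⟩
    rintro (⟨l1, hl1⟩ | ⟨l1, hl1⟩) (⟨l2, hl2⟩ | ⟨l2, hl2⟩) h <;>
      simp only [Subtype.mk.injEq] at h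
    · exact congrArg Sum.inl (Subtype.ext (decP_inj h))
    · -- decP l1 = map negK (decP l2) : contradiction via heads
      exfalso
      obtain ⟨b1, t1, hb1⟩ := List.exists_cons_of_ne_nil (hne1 l1 hl1)
      obtain ⟨b2, t2, hb2⟩ := List.exists_cons_of_ne_nil (hne2 l2 hl2)
      obtain ⟨x1, y1⟩ := b1
      obtain ⟨x2, y2⟩ := b2
      rw [hb1, hb2] at h
      simp only [decP, List.map_cons, List.cons.injEq] at h
      have hpos := posStep_dy_pos x1
      rw [h.1] at hpos
      simp only [negK_dy] at hpos
      linarith [posStep_dy_pos x2]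
    · exfalso
      obtain ⟨b1, t1, hb1⟩ := List.exists_cons_of_ne_nil (hne2 l1 hl1)
      obtain ⟨b2, t2, hb2⟩ := List.exists_cons_of_ne_nil (hne1 l2 hl2)
      obtain ⟨x1, y1⟩ := b1
      obtain ⟨x2, y2⟩ := b2
      rw [hb1, hb2] at h
      simp only [decP, List.map_cons, List.cons.injEq] at h
      have hpos := posStep_dy_pos x2
      rw [h.1.symm] at hpos
      simp only [negK_dy] at hpos
      linarith [posStep_dy_pos x1]
    · exact congrArg Sum.inr (Subtype.ext (decP_inj (mapneg_inj h)))
  · -- surjective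
    rintro ⟨p, hs, ha, hz⟩
    have heven : Even p.length := by
      obtain ⟨t, ht⟩ := size_add_alt p
      rw [hs, ha] at ht
      have hl2 : ((p.length : ℤ)) % 2 = 0 := by omega
      have hl3 : p.length % 2 = 0 := by exact_mod_cast hl2
      rw [Nat.even_iff]
      exact hl3
    rcases p with _ | ⟨s, rest⟩
    · exfalso
      have hn0 : (n : ℤ) = 0 := by simpa [pathSize] using hs.symm
      have hk0 : k = 0 := by simpa [pathAlt] using ha.symm
      exact hne ⟨by exact_mod_cast hn0, hk0⟩
    · 
      rcases lt_trichotomy s.dy 0 with hsd | hsd | hsd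
      · -- starts negative: use inr
        have hzn : IsZigzag ((s :: rest).map negK) := zig_mapneg hz
        have hen : Even ((s :: rest).map negK).length := by simpa using heven
        have hhn : ∀ u, ((s :: rest).map negK).head? = some u → 0 < u.dy := by
          intro u hu
          simp only [List.map_cons, List.head?_cons, Option.some.injEq] at hu
          subst hu
          simp only [negK_dy]
          linarith
        obtain ⟨l, hl⟩ := exists_decP _ hzn hen hhn
        have hpl : s :: rest = (decP l).map negK := by
          rw [← hl, List.map_map]
          simp [Function.comp_def]
        refine ⟨Sum.inr ⟨l, ?_, ?_⟩, ?_⟩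
        · rw [← size_decP, ← size_mapneg, ← hpl]; exact hs
        · have : pathAlt ((decP l).map negK) = k := by rw [← hpl]; exact ha
          rw [alt_mapneg, alt_decP] at this
          linarith
        · exact Subtype.ext hpl.symm
      · exact absurd hsd (dy_ne_zero s)
      · -- starts positive: use inl
        have hh : ∀ u, (s :: rest).head? = some u → 0 < u.dy := by
          intro u hu
          simp only [List.head?_cons, Option.some.injEq] at hu
          subst hu
          exact hsd
        obtain ⟨l, hl⟩ := exists_decP _ hz heven hh
        refine ⟨Sum.inl ⟨l, ?_, ?_⟩, ?_⟩
        · rw [← size_decP, ← hl]; exact hs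
        · rw [← alt_decP, ← hl]; exact ha
        · exact Subtype.ext hl.symm

end ZZ


theorem stmt8 (n : ℕ) (k : ℤ) (hpar : (n : ℤ) % 2 = k % 2)
    (hk : k.natAbs ≤ n) (hne : ¬ (n = 0 ∧ k = 0)) :
    Nat.card {p : List KStep //
        pathSize p = (n : ℤ) ∧ pathAlt p = k ∧ IsZigzag p} =
      2 * ∑ i ∈ Finset.range ((n - k.natAbs) / 2 + 1),
        Nat.choose ((n - k.natAbs) / 2 - i) i *
          Nat.choose ((n - k.natAbs) / 2 - i) (k.natAbs + i) := by
  have key := ZZ.card_Z n k hpar hne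
  set k' : ℕ := k.natAbs with hk'
  have hm : n = 2 * ((n - k') / 2) + k' := by
    rcases Int.natAbs_eq k with h | h <;> omega
  have hT : Nat.card {l : List (Bool × Bool) //
      (l.map ZZ.bx).sum = (n : ℤ) ∧ (l.map ZZ.by').sum = ((k' : ℕ) : ℤ)} =
      ∑ i ∈ Finset.range ((n - k') / 2 + 1),
        ((n - k') / 2 - i).choose i * ((n - k') / 2 - i).choose (k' + i) :=
    ZZ.card_T n ((n - k') / 2) k' hm
  have hswap := Nat.card_congr (ZZ.swapT n ((k' : ℕ) : ℤ))
  rcases Int.natAbs_eq k with h | h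
  · rw [key, h, hT, ← hswap, hT]
    ring
  · rw [key, h]
    simp only [neg_neg]
    rw [hT, ← hswap, hT]
    ring
end

section
/- Let n ∈ ℕ and k ∈ ℤ with n ≡ k (mod 2), and let i be an even natural number. Then |Z^{i,+}_{n,k}| = |Z^{i,−}_{n,k}| = C(i/2, (n−i−k)/2)·C(i/2, (n−i+k)/2), with the convention that a binomial coefficient C(a,b) is 0 whenever b < 0 or b > a. -/
open Filter Topology

/-- The path is empty or its first step is an up-step (`N` or `E`). -/
def StartsUp (p : List KStep) : Prop := ∀ s ∈ p.head?, 0 < s.dy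

/-- The path is empty or its first step is a down-step (`Nb` or `Eb`). -/
def StartsDown (p : List KStep) : Prop := ∀ s ∈ p.head?, s.dy < 0

/-- Binomial coefficient on integers with the convention that it is `0`
whenever `b < 0` or `b > a`. -/
def zchoose (a b : ℤ) : ℕ :=
  if 0 ≤ b ∧ b ≤ a then Nat.choose a.toNat b.toNat else 0

namespace Stmt9Aux

open Finset

def up : Bool → KStep | true => .N | false => .E
def dn : Bool → KStep | true => .Nb | false => .Eb

def zig : List (Bool × Bool) → List KStep
  | [] => []
  | (a, b) :: w => up a :: dn b :: zig w

def unzig : List KStep → List (Bool × Bool)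
  | s :: t :: r =>
      ((match s with | .N => true | _ => false),
       (match t with | .Nb => true | _ => false)) :: unzig r
  | _ => []

@[simp] lemma pathSize_nil : pathSize [] = 0 := rfl
@[simp] lemma pathSize_cons (s p) : pathSize (s :: p) = s.dx + pathSize p := by
  simp [pathSize]
@[simp] lemma pathAlt_nil : pathAlt [] = 0 := rfl
@[simp] lemma pathAlt_cons (s p) : pathAlt (s :: p) = s.dy + pathAlt p := by
  simp [pathAlt]

@[simp] lemma up_dy_pos (a : Bool) : 0 < (up a).dy := by cases a <;> decide
@[simp] lemma dn_dy_neg (a : Bool) : (dn a).dy < 0 := by cases a <;> decide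

lemma length_zig (w : List (Bool × Bool)) : (zig w).length = 2 * w.length := by
  induction w with
  | nil => rfl
  | cons h t ih => obtain ⟨a, b⟩ := h; simp [zig, ih]; omega

lemma zigzag_zig (w : List (Bool × Bool)) :
    IsZigzag (zig w) ∧ ∀ s : KStep, s.dy < 0 →
      List.Chain' (fun a b => a.dy * b.dy < 0) (s :: zig w) := by
  induction w with
  | nil => exact ⟨List.isChain_nil, fun s _ => List.isChain_singleton s⟩
  | cons h t ih =>
    obtain ⟨a, b⟩ := h
    have h1 : List.Chain' (fun a b : KStep => a.dy * b.dy < 0) (dn b :: zig t) :=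
      ih.2 (dn b) (dn_dy_neg b)
    constructor
    · refine List.isChain_cons_cons.2 ⟨?_, h1⟩
      exact mul_neg_of_pos_of_neg (up_dy_pos a) (dn_dy_neg b)
    · intro s hs
      refine List.isChain_cons_cons.2 ⟨?_, List.isChain_cons_cons.2
        ⟨mul_neg_of_pos_of_neg (up_dy_pos a) (dn_dy_neg b), h1⟩⟩
      exact mul_neg_of_neg_of_pos hs (up_dy_pos a)

lemma startsUp_zig (w : List (Bool × Bool)) : StartsUp (zig w) := by
  cases w with
  | nil => intro s hs; simp [zig] at hs
  | cons h t =>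
    obtain ⟨a, b⟩ := h
    intro s hs
    simp [zig] at hs
    subst hs
    exact up_dy_pos a

lemma size_zig (w : List (Bool × Bool)) :
    pathSize (zig w) = 4 * w.length - (w.map Prod.fst).count true
      - (w.map Prod.snd).count true := by
  induction w with
  | nil => simp [zig]
  | cons h t ih =>
    obtain ⟨a, b⟩ := h
    cases a <;> cases b <;>
      simp [zig, up, dn, KStep.dx, List.count_cons, ih] <;> push_cast <;> ring

lemma alt_zig (w : List (Bool × Bool)) :
    pathAlt (zig w) = (w.map Prod.fst).count true - (w.map Prod.snd).count true := by
  induction w with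
  | nil => simp [zig]
  | cons h t ih =>
    obtain ⟨a, b⟩ := h
    cases a <;> cases b <;>
      simp [zig, up, dn, KStep.dy, List.count_cons, ih] <;> push_cast <;> ring

lemma unzig_zig (w : List (Bool × Bool)) : unzig (zig w) = w := by
  induction w with
  | nil => rfl
  | cons h t ih =>
    obtain ⟨a, b⟩ := h
    cases a <;> cases b <;> simp [zig, up, dn, unzig, ih]

lemma zig_unzig : ∀ p : List KStep, IsZigzag p → StartsUp p → Even p.length →
    zig (unzig p) = p
  | [], _, _, _ => rfl
  | [s], _, _, he => by simp at he
  | s :: t :: r, hz, hu, he => by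
    have hs : 0 < s.dy := hu s (by simp)
    have hst : s.dy * t.dy < 0 := (List.isChain_cons_cons.1 hz).1
    have hz2 : List.Chain' (fun a b : KStep => a.dy * b.dy < 0) (t :: r) :=
      (List.isChain_cons_cons.1 hz).2
    have ht : t.dy < 0 := by nlinarith
    have hr : IsZigzag r := hz2.tail
    have hur : StartsUp r := by
      intro x hx
      cases r with
      | nil => simp at hx
      | cons u r' =>
        simp at hx
        subst hx
        have := (List.isChain_cons_cons.1 hz2).1
        nlinarith
    have her : Even r.length := by
      obtain ⟨c, hc⟩ := he
      exact ⟨c - 1, by simp at hc; omega⟩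
    have ihr := zig_unzig r hr hur her
    have hs' : s = .N ∨ s = .E := by
      cases s <;> simp_all [KStep.dy]
    have ht' : t = .Nb ∨ t = .Eb := by
      cases t <;> simp_all [KStep.dy]
    rcases hs' with rfl | rfl <;> rcases ht' with rfl | rfl <;>
      simp [unzig, zig, up, dn, ihr]

lemma count_eq_sum (l : List Bool) :
    (l.count true : ℤ) = (l.map fun b => if b then (1:ℤ) else 0).sum := by
  induction l with
  | nil => simp
  | cons a t ih => cases a <;> simp [List.count_cons, ih, add_comm]

lemma count_ofFn {m : ℕ} (g : Fin m → Bool) :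
    ((List.ofFn g).count true : ℤ) = #(univ.filter fun j => g j = true) := by
  rw [count_eq_sum, List.map_ofFn, List.sum_ofFn, Finset.natCast_card_filter]
  simp

def boolFunEquivFinset (m : ℕ) : (Fin m → Bool) ≃ Finset (Fin m) where
  toFun f := univ.filter fun j => f j = true
  invFun s := fun j => decide (j ∈ s)
  left_inv f := by funext j; simp
  right_inv s := by ext j; simp

lemma card_fun (m : ℕ) (A : ℤ) :
    Nat.card {f : Fin m → Bool // (#(univ.filter fun j => f j = true) : ℤ) = A} =
      (if 0 ≤ A then m.choose A.toNat else 0) := by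
  rcases lt_or_ge A 0 with h | h
  · rw [if_neg (by omega)]
    have : IsEmpty {f : Fin m → Bool // (#(univ.filter fun j => f j = true) : ℤ) = A} :=
      ⟨fun ⟨f, hf⟩ => by omega⟩
    simp [Nat.card_of_isEmpty]
  · rw [if_pos h]
    have e : {f : Fin m → Bool // (#(univ.filter fun j => f j = true) : ℤ) = A} ≃
        {s : Finset (Fin m) // #s = A.toNat} :=
      Equiv.subtypeEquiv (boolFunEquivFinset m) (fun f => by
        simp only [boolFunEquivFinset, Equiv.coe_fn_mk]
        omega)
    rw [Nat.card_congr e, Nat.card_eq_fintype_card, Fintype.card_finset_len,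
      Fintype.card_fin]

lemma zchoose_eq (m : ℕ) (A : ℤ) :
    zchoose m A = (if 0 ≤ A then m.choose A.toNat else 0) := by
  unfold zchoose
  by_cases h : 0 ≤ A
  · rw [if_pos h]
    by_cases h2 : A ≤ (m : ℤ)
    · rw [if_pos ⟨h, h2⟩, Int.toNat_natCast]
    · rw [if_neg (by omega)]
      exact (Nat.choose_eq_zero_of_lt (by omega)).symm
  · rw [if_neg (by omega), if_neg h]

lemma zchoose_symm (m : ℕ) (x : ℤ) : zchoose m ((m : ℤ) - x) = zchoose m x := by
  unfold zchoose
  by_cases h : 0 ≤ x ∧ x ≤ (m : ℤ)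
  · rw [if_pos (by omega), if_pos h]
    have e1 : ((m : ℤ)).toNat = m := by omega
    have e2 : ((m : ℤ) - x).toNat = m - x.toNat := by omega
    rw [e1, e2]
    exact Nat.choose_symm (by omega)
  · rw [if_neg (by omega), if_neg h]

def listFunEquiv {γ : Type*} (m : ℕ) (P : List γ → Prop) :
    {w : List γ // w.length = m ∧ P w} ≃ {f : Fin m → γ // P (List.ofFn f)} where
  toFun w := ⟨fun j => w.1.get (Fin.cast w.2.1.symm j), by
    have : List.ofFn (fun j => w.1.get (Fin.cast w.2.1.symm j)) = w.1 := by
      apply List.ext_get (by simp [w.2.1])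
      intro i h1 h2
      simp
    rw [this]; exact w.2.2⟩
  invFun f := ⟨List.ofFn f.1, by simp, f.2⟩
  left_inv w := by
    apply Subtype.ext
    apply List.ext_get (by simp [w.2.1])
    intro i h1 h2
    simp
  right_inv f := by
    apply Subtype.ext
    funext j
    simp

lemma main_up (n m : ℕ) (k A B : ℤ)
    (hA : 2 * A = 4 * m - n + k) (hB : 2 * B = 4 * m - n - k) :
    Nat.card {p : List KStep // pathSize p = (n : ℤ) ∧ pathAlt p = k ∧ IsZigzag p ∧
        StartsUp p ∧ p.length = 2 * m} =
      (if 0 ≤ A then m.choose A.toNat else 0) *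
        (if 0 ≤ B then m.choose B.toNat else 0) := by
  have fwd : ∀ w : List (Bool × Bool), (w.length = m ∧
        ((((w.map Prod.fst).count true : ℤ) = A) ∧ (((w.map Prod.snd).count true : ℤ) = B))) →
      (pathSize (zig w) = (n : ℤ) ∧ pathAlt (zig w) = k ∧ IsZigzag (zig w) ∧
        StartsUp (zig w) ∧ (zig w).length = 2 * m) := by
    rintro w ⟨hlen, h1, h2⟩
    refine ⟨?_, ?_, (zigzag_zig w).1, startsUp_zig w, by rw [length_zig, hlen]⟩
    · rw [size_zig, hlen]; omega
    · rw [alt_zig]; omega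
  have bwd : ∀ p : List KStep, (pathSize p = (n : ℤ) ∧ pathAlt p = k ∧ IsZigzag p ∧
        StartsUp p ∧ p.length = 2 * m) → ((unzig p).length = m ∧
        ((((unzig p).map Prod.fst).count true : ℤ) = A) ∧
          ((((unzig p).map Prod.snd).count true : ℤ) = B)) := by
    rintro p ⟨h1, h2, h3, h4, h5⟩
    have hzz : zig (unzig p) = p := zig_unzig p h3 h4 ⟨m, by omega⟩
    have hlen : (unzig p).length = m := by
      have := length_zig (unzig p); rw [hzz] at this; omega
    have hsz := size_zig (unzig p)
    have hal := alt_zig (unzig p)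
    rw [hzz, h1, hlen] at hsz
    rw [hzz, h2] at hal
    exact ⟨hlen, by omega, by omega⟩
  have e1 : {w : List (Bool × Bool) // w.length = m ∧
        ((((w.map Prod.fst).count true : ℤ) = A) ∧ (((w.map Prod.snd).count true : ℤ) = B))} ≃
      {p : List KStep // pathSize p = (n : ℤ) ∧ pathAlt p = k ∧ IsZigzag p ∧
        StartsUp p ∧ p.length = 2 * m} :=
    { toFun := fun w => ⟨zig w.1, fwd w.1 w.2⟩
      invFun := fun p => ⟨unzig p.1, bwd p.1 p.2⟩
      left_inv := fun w => Subtype.ext (unzig_zig w.1)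
      right_inv := fun p => Subtype.ext (zig_unzig p.1 p.2.2.2.1 p.2.2.2.2.1
        ⟨m, by have := p.2.2.2.2.2; omega⟩) }
  rw [← Nat.card_congr e1, Nat.card_congr (listFunEquiv m _)]
  have e2 : {f : Fin m → Bool × Bool //
        ((((List.ofFn f).map Prod.fst).count true : ℤ) = A) ∧
          ((((List.ofFn f).map Prod.snd).count true : ℤ) = B)} ≃
      {f : Fin m → Bool × Bool //
        ((#(univ.filter fun j => (f j).1 = true) : ℤ) = A) ∧
          ((#(univ.filter fun j => (f j).2 = true) : ℤ) = B)} :=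
    Equiv.subtypeEquivRight (fun f => by
      rw [List.map_ofFn, List.map_ofFn, count_ofFn, count_ofFn]
      exact Iff.rfl)
  rw [Nat.card_congr e2]
  have e3 : {f : Fin m → Bool × Bool //
        ((#(univ.filter fun j => (f j).1 = true) : ℤ) = A) ∧
          ((#(univ.filter fun j => (f j).2 = true) : ℤ) = B)} ≃
      {g : Fin m → Bool // (#(univ.filter fun j => g j = true) : ℤ) = A} ×
        {g : Fin m → Bool // (#(univ.filter fun j => g j = true) : ℤ) = B} :=
    { toFun := fun f => (⟨fun j => (f.1 j).1, f.2.1⟩, ⟨fun j => (f.1 j).2, f.2.2⟩)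
      invFun := fun gh => ⟨fun j => (gh.1.1 j, gh.2.1 j), gh.1.2, gh.2.2⟩
      left_inv := fun f => rfl
      right_inv := fun gh => rfl }
  rw [Nat.card_congr e3, Nat.card_prod, card_fun, card_fun]

def flip : KStep → KStep
  | .N => .Nb | .Nb => .N | .E => .Eb | .Eb => .E

@[simp] lemma flip_flip (s : KStep) : flip (flip s) = s := by cases s <;> rfl
@[simp] lemma dx_flip (s : KStep) : (flip s).dx = s.dx := by cases s <;> rfl
@[simp] lemma dy_flip (s : KStep) : (flip s).dy = -s.dy := by cases s <;> rfl

lemma size_flip (p : List KStep) : pathSize (p.map flip) = pathSize p := by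
  induction p with
  | nil => rfl
  | cons s t ih => simp [ih]

lemma alt_flip (p : List KStep) : pathAlt (p.map flip) = -pathAlt p := by
  induction p with
  | nil => simp
  | cons s t ih => simp [ih]; ring

lemma zigzag_flip {p : List KStep} (h : IsZigzag p) : IsZigzag (p.map flip) := by
  unfold IsZigzag List.Chain' at *
  rw [List.isChain_map]
  refine h.imp ?_
  intro a b hab
  simp only [dy_flip]
  nlinarith

lemma startsDown_flip {p : List KStep} (h : StartsUp p) : StartsDown (p.map flip) := by
  intro s hs
  rw [List.head?_map] at hs
  cases hp : p.head? with
  | none => rw [hp] at hs; simp at hs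
  | some u =>
    rw [hp] at hs
    simp at hs
    subst hs
    have := h u (by rw [hp]; rfl)
    simp
    omega

lemma startsUp_flip {p : List KStep} (h : StartsDown p) : StartsUp (p.map flip) := by
  intro s hs
  rw [List.head?_map] at hs
  cases hp : p.head? with
  | none => rw [hp] at hs; simp at hs
  | some u =>
    rw [hp] at hs
    simp at hs
    subst hs
    have := h u (by rw [hp]; rfl)
    simp
    omega

def flipEquiv (n : ℤ) (k : ℤ) (i : ℕ) :
    {p : List KStep // pathSize p = n ∧ pathAlt p = k ∧ IsZigzag p ∧
        StartsDown p ∧ p.length = i} ≃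
    {p : List KStep // pathSize p = n ∧ pathAlt p = -k ∧ IsZigzag p ∧
        StartsUp p ∧ p.length = i} where
  toFun p := ⟨p.1.map flip, by
    obtain ⟨p, h1, h2, h3, h4, h5⟩ := p
    exact ⟨by rw [size_flip, h1], by rw [alt_flip, h2], zigzag_flip h3,
      startsUp_flip h4, by simp [h5]⟩⟩
  invFun p := ⟨p.1.map flip, by
    obtain ⟨p, h1, h2, h3, h4, h5⟩ := p
    exact ⟨by rw [size_flip, h1], by rw [alt_flip, h2]; ring, zigzag_flip h3,
      startsDown_flip h4, by simp [h5]⟩⟩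
  left_inv p := by
    apply Subtype.ext
    have h : flip ∘ flip = id := funext flip_flip
    simp [List.map_map, h]
  right_inv p := by
    apply Subtype.ext
    have h : flip ∘ flip = id := funext flip_flip
    simp [List.map_map, h]

end Stmt9Aux

open Stmt9Aux

theorem stmt9 (n i : ℕ) (k : ℤ) (hpar : (n : ℤ) % 2 = k % 2) (hi : Even i) :
    Nat.card {p : List KStep //
        pathSize p = (n : ℤ) ∧ pathAlt p = k ∧ IsZigzag p ∧ StartsUp p ∧
          p.length = i} =
      zchoose ((i : ℤ) / 2) (((n : ℤ) - i - k) / 2) *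
        zchoose ((i : ℤ) / 2) (((n : ℤ) - i + k) / 2) ∧
    Nat.card {p : List KStep //
        pathSize p = (n : ℤ) ∧ pathAlt p = k ∧ IsZigzag p ∧ StartsDown p ∧
          p.length = i} =
      zchoose ((i : ℤ) / 2) (((n : ℤ) - i - k) / 2) *
        zchoose ((i : ℤ) / 2) (((n : ℤ) - i + k) / 2) := by
  obtain ⟨m, hm⟩ := hi
  have him : i = 2 * m := by omega
  subst him
  set x : ℤ := ((n : ℤ) - 2 * m - k) / 2 with hx
  set y : ℤ := ((n : ℤ) - 2 * m + k) / 2 with hy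
  have hix : ((2 * m : ℕ) : ℤ) / 2 = (m : ℤ) := by push_cast; omega
  have hxx : x = ((n : ℤ) - (2 * m : ℕ) - k) / 2 := by push_cast [hx]; rfl
  have hyy : y = ((n : ℤ) - (2 * m : ℕ) + k) / 2 := by push_cast [hy]; rfl
  have hA : 2 * ((m : ℤ) - x) = 4 * m - n + k := by omega
  have hB : 2 * ((m : ℤ) - y) = 4 * m - n - k := by omega
  have key1 := main_up n m k ((m : ℤ) - x) ((m : ℤ) - y) hA hB
  have hA' : 2 * ((m : ℤ) - y) = 4 * m - n + (-k) := by omega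
  have hB' : 2 * ((m : ℤ) - x) = 4 * m - n - (-k) := by omega
  have key2 := main_up n m (-k) ((m : ℤ) - y) ((m : ℤ) - x) hA' hB'
  have hz1 : zchoose ((m : ℤ)) x =
      (if 0 ≤ (m : ℤ) - x then m.choose ((m : ℤ) - x).toNat else 0) := by
    rw [← zchoose_symm m x, zchoose_eq]
  have hz2 : zchoose ((m : ℤ)) y =
      (if 0 ≤ (m : ℤ) - y then m.choose ((m : ℤ) - y).toNat else 0) := by
    rw [← zchoose_symm m y, zchoose_eq]
  constructor
  · rw [← hxx, ← hyy, hix, hz1, hz2, ← key1]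
  · rw [Nat.card_congr (flipEquiv n k (2 * m)), ← hxx, ← hyy, hix, hz1, hz2,
      key2, mul_comm]
end

section
/- Let n ∈ ℕ and k ∈ ℤ with n ≡ k (mod 2), |k| ≤ n and (n,k) ≠ (0,0). Then |Z_{n,k}| = 2·Σ_{i even, 0 ≤ i ≤ n−k} C(i/2, (n−i−k)/2)·C(i/2, (n−i+k)/2), with the convention that a binomial coefficient C(a,b) is 0 whenever b < 0 or b > a. -/
open Filter Topology

namespace ZZaux

def sgn : KStep → Bool
  | .N => true | .E => true | .Nb => false | .Eb => false

def isE : KStep → Bool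
  | .E => true | .Eb => true | .N => false | .Nb => false

def stepOf : Bool → Bool → KStep
  | true, false => .N
  | true, true => .E
  | false, false => .Nb
  | false, true => .Eb

def bi (b : Bool) : ℤ := if b then 1 else 0

def sz (l : List (Bool × Bool)) : ℤ := (l.map fun q => 2 + bi q.1 + bi q.2).sum
def al (l : List (Bool × Bool)) : ℤ := (l.map fun q => bi q.2 - bi q.1).sum
def c1 (l : List (Bool × Bool)) : ℤ := (l.map fun q => bi q.1).sum
def c2 (l : List (Bool × Bool)) : ℤ := (l.map fun q => bi q.2).sum

@[simp] lemma sz_nil : sz [] = 0 := rfl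
@[simp] lemma al_nil : al [] = 0 := rfl
@[simp] lemma c1_nil : c1 [] = 0 := rfl
@[simp] lemma c2_nil : c2 [] = 0 := rfl
@[simp] lemma sz_cons (q l) : sz (q :: l) = 2 + bi q.1 + bi q.2 + sz l := by simp [sz]
@[simp] lemma al_cons (q l) : al (q :: l) = (bi q.2 - bi q.1) + al l := by simp [al]
@[simp] lemma c1_cons (q l) : c1 (q :: l) = bi q.1 + c1 l := by simp [c1]
@[simp] lemma c2_cons (q l) : c2 (q :: l) = bi q.2 + c2 l := by simp [c2]

lemma bi_nonneg (b) : 0 ≤ bi b := by cases b <;> simp [bi]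
lemma bi_le_one (b) : bi b ≤ 1 := by cases b <;> simp [bi]

lemma sz_eq (l : List (Bool × Bool)) : sz l = 2 * l.length + c1 l + c2 l := by
  induction l with
  | nil => simp
  | cons q l ih => simp [ih]; push_cast; ring

lemma al_eq (l : List (Bool × Bool)) : al l = c2 l - c1 l := by
  induction l with
  | nil => simp
  | cons q l ih => simp [ih]; ring

lemma c1_nonneg (l : List (Bool × Bool)) : 0 ≤ c1 l := by
  induction l with
  | nil => simp
  | cons q l ih => have := bi_nonneg q.1; simp; omega

lemma c2_nonneg (l : List (Bool × Bool)) : 0 ≤ c2 l := by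
  induction l with
  | nil => simp
  | cons q l ih => have := bi_nonneg q.2; simp; omega

lemma c1_le_length (l : List (Bool × Bool)) : c1 l ≤ l.length := by
  induction l with
  | nil => simp
  | cons q l ih => have := bi_le_one q.1; simp; push_cast; omega

lemma c2_le_length (l : List (Bool × Bool)) : c2 l ≤ l.length := by
  induction l with
  | nil => simp
  | cons q l ih => have := bi_le_one q.2; simp; push_cast; omega

lemma two_length_le_sz (l : List (Bool × Bool)) : 2 * (l.length : ℤ) ≤ sz l := by
  have := sz_eq l; have := c1_nonneg l; have := c2_nonneg l; omega

end ZZaux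

namespace ZZaux

def dec (s : Bool) : List (Bool × Bool) → List KStep
  | [] => []
  | q :: l => stepOf s q.1 :: stepOf (!s) q.2 :: dec s l

def enc : List KStep → List (Bool × Bool)
  | a :: b :: p => (isE a, isE b) :: enc p
  | _ => []

@[simp] lemma stepOf_sgn_isE (a : KStep) : stepOf (sgn a) (isE a) = a := by
  cases a <;> rfl

@[simp] lemma sgn_stepOf (s b) : sgn (stepOf s b) = s := by
  cases s <;> cases b <;> rfl

@[simp] lemma isE_stepOf (s b) : isE (stepOf s b) = b := by
  cases s <;> cases b <;> rfl

lemma dy_mul_neg (a b : KStep) : a.dy * b.dy < 0 ↔ sgn b = !sgn a := by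
  cases a <;> cases b <;> decide

lemma dx_stepOf (s b) : (stepOf s b).dx = 1 + bi b := by
  cases s <;> cases b <;> simp [stepOf, KStep.dx, bi]

lemma dy_stepOf_true (b) : (stepOf true b).dy = 2 - bi b := by
  cases b <;> simp [stepOf, KStep.dy, bi]

lemma dy_stepOf_false (b) : (stepOf false b).dy = -(2 - bi b) := by
  cases b <;> simp [stepOf, KStep.dy, bi]

@[simp] lemma pathSize_nil : pathSize [] = 0 := rfl
@[simp] lemma pathAlt_nil : pathAlt [] = 0 := rfl
@[simp] lemma pathSize_cons (a p) : pathSize (a :: p) = a.dx + pathSize p := by simp [pathSize]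
@[simp] lemma pathAlt_cons (a p) : pathAlt (a :: p) = a.dy + pathAlt p := by simp [pathAlt]

lemma pathSize_dec (s : Bool) (l : List (Bool × Bool)) : pathSize (dec s l) = sz l := by
  induction l with
  | nil => rfl
  | cons q l ih => simp [dec, dx_stepOf, ih]; ring

lemma pathAlt_dec (s : Bool) (l : List (Bool × Bool)) :
    pathAlt (dec s l) = if s then al l else -al l := by
  induction l with
  | nil => cases s <;> simp [dec]
  | cons q l ih =>
    cases s <;> simp_all [dec, dy_stepOf_true, dy_stepOf_false] <;> ring

lemma zig_dec (s : Bool) (l : List (Bool × Bool)) :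
    IsZigzag (dec s l) ∧ ∀ a ∈ (dec s l).head?, sgn a = s := by
  induction l with
  | nil => simp [dec, IsZigzag]; exact List.IsChain.nil
  | cons q l ih =>
    refine ⟨?_, ?_⟩
    · show List.Chain' _ (stepOf s q.1 :: stepOf (!s) q.2 :: dec s l)
      refine List.isChain_cons_cons.2 ⟨?_, ?_⟩
      · rw [dy_mul_neg]; simp
      · refine List.isChain_cons.2 ⟨?_, ih.1⟩
        intro z hz
        rw [dy_mul_neg, ih.2 z hz]
        simp
    · intro a ha
      simp [dec] at ha
      subst ha
      simp

lemma dec_enc : ∀ (p : List KStep) (s : Bool), IsZigzag p → p.length % 2 = 0 →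
    (∀ a ∈ p.head?, sgn a = s) → dec s (enc p) = p
  | [], _, _, _, _ => rfl
  | [a], _, _, hl, _ => by simp at hl
  | a :: b :: p, s, hz, hl, hh => by
    have ha : sgn a = s := hh a rfl
    obtain ⟨hab, hz'⟩ := List.isChain_cons_cons.1 hz
    obtain ⟨hb2, hz''⟩ := List.isChain_cons.1 hz'
    have hb : sgn b = !s := by rw [dy_mul_neg] at hab; rw [hab, ha]
    have hlen : p.length % 2 = 0 := by simp only [List.length_cons] at hl; omega
    have hrec := dec_enc p s hz'' hlen (by
      intro c hc
      have h1 := hb2 c hc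
      rw [dy_mul_neg] at h1
      rw [h1, hb, Bool.not_not])
    show stepOf s (isE a) :: stepOf (!s) (isE b) :: dec s (enc p) = a :: b :: p
    rw [hrec, ← hb, stepOf_sgn_isE, ← ha, stepOf_sgn_isE]

lemma dec_inj : ∀ {s : Bool} {l l' : List (Bool × Bool)}, dec s l = dec s l' → l = l'
  | _, [], [], _ => rfl
  | s, [], q :: l', h => by simp [dec] at h
  | s, q :: l, [], h => by simp [dec] at h
  | s, q :: l, q' :: l', h => by
    simp [dec] at h
    obtain ⟨h1, h2, h3⟩ := h
    have e1 : q.1 = q'.1 := by have := congrArg isE h1; simpa using this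
    have e2 : q.2 = q'.2 := by have := congrArg isE h2; simpa using this
    have := dec_inj h3
    simp [this, Prod.ext_iff, e1, e2]

lemma parity_length (p : List KStep) : (pathSize p - pathAlt p) % 2 = (p.length : ℤ) % 2 := by
  induction p with
  | nil => simp
  | cons a p ih =>
    have hda : (a.dx - a.dy) % 2 = 1 := by cases a <;> decide
    simp only [pathSize_cons, pathAlt_cons, List.length_cons]
    push_cast
    omega

end ZZaux

namespace ZZaux

lemma sum_bi_eq_card (t : ℕ) (f : Fin t → Bool) :
    (∑ i, bi (f i)) = ((Finset.univ.filter (fun i => f i = true)).card : ℤ) := by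
  simp [bi, Finset.sum_boole]

lemma card_fun_bool (t u : ℕ) :
    Nat.card {f : Fin t → Bool // (∑ i, bi (f i)) = (u : ℤ)} = t.choose u := by
  have hdec : DecidablePred (fun f : Fin t → Bool => (∑ i, bi (f i)) = (u : ℤ)) :=
    fun f => inferInstanceAs (Decidable _)
  rw [Nat.card_eq_fintype_card, Fintype.card_subtype]
  have h2 : (Finset.powersetCard u (Finset.univ : Finset (Fin t))).card = t.choose u := by
    rw [Finset.card_powersetCard, Finset.card_univ, Fintype.card_fin]
  rw [← h2]
  apply Finset.card_nbij' (fun f => Finset.univ.filter (fun x => f x = true))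
      (fun s => fun x => decide (x ∈ s))
  · intro f hf
    simp only [Finset.mem_coe, Finset.mem_filter, Finset.mem_univ, true_and] at hf
    rw [sum_bi_eq_card] at hf
    rw [Finset.mem_coe, Finset.mem_powersetCard_univ]
    exact_mod_cast hf
  · intro s hs
    rw [Finset.mem_coe, Finset.mem_powersetCard_univ] at hs
    simp only [Finset.mem_coe, Finset.mem_filter, Finset.mem_univ, true_and]
    rw [sum_bi_eq_card]
    have : Finset.univ.filter (fun x => decide (x ∈ s) = true) = s := by
      ext x; simp
    rw [this, hs]
  · intro f hf
    funext x
    simp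
  · intro s hs
    ext x
    simp

end ZZaux

namespace ZZaux

lemma card_fun_pair (t u d : ℕ) :
    Nat.card {f : Fin t → Bool × Bool //
        (∑ i, bi (f i).1) = (u : ℤ) ∧ (∑ i, bi (f i).2) = (d : ℤ)} =
      t.choose u * t.choose d := by
  have e1 : {f : Fin t → Bool × Bool //
        (∑ i, bi (f i).1) = (u : ℤ) ∧ (∑ i, bi (f i).2) = (d : ℤ)} ≃
      {g : (Fin t → Bool) × (Fin t → Bool) //
        (∑ i, bi (g.1 i)) = (u : ℤ) ∧ (∑ i, bi (g.2 i)) = (d : ℤ)} :=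
    (Equiv.arrowProdEquivProdArrow (Fin t) (fun _ => Bool) (fun _ => Bool)).subtypeEquiv (fun f => by
      simp [Equiv.arrowProdEquivProdArrow])
  rw [Nat.card_congr e1,
    Nat.card_congr (Equiv.subtypeProdEquivProd
      (p := fun g1 : Fin t → Bool => (∑ i, bi (g1 i)) = (u : ℤ))
      (q := fun g2 : Fin t → Bool => (∑ i, bi (g2 i)) = (d : ℤ))),
    Nat.card_prod, card_fun_bool, card_fun_bool]

lemma card_lists (t u d : ℕ) :
    Nat.card {l : List (Bool × Bool) //
        l.length = t ∧ c1 l = (u : ℤ) ∧ c2 l = (d : ℤ)} = t.choose u * t.choose d := by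
  have e1 : {l : List (Bool × Bool) // l.length = t ∧ c1 l = (u : ℤ) ∧ c2 l = (d : ℤ)} ≃
      {v : List.Vector (Bool × Bool) t // c1 v.1 = (u : ℤ) ∧ c2 v.1 = (d : ℤ)} :=
    (Equiv.subtypeSubtypeEquivSubtypeInter _ _).symm
  have e2 : {v : List.Vector (Bool × Bool) t // c1 v.1 = (u : ℤ) ∧ c2 v.1 = (d : ℤ)} ≃
      {f : Fin t → Bool × Bool //
        c1 (List.ofFn f) = (u : ℤ) ∧ c2 (List.ofFn f) = (d : ℤ)} :=
    ((Equiv.vectorEquivFin _ t).symm.subtypeEquiv (fun f => by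
      have : ((Equiv.vectorEquivFin (Bool × Bool) t).symm f).1 = List.ofFn f := by
        simp [Equiv.vectorEquivFin]
        exact (List.Vector.toList_ofFn f)
      rw [this])).symm
  have hc1 : ∀ f : Fin t → Bool × Bool, c1 (List.ofFn f) = ∑ i, bi (f i).1 := by
    intro f; simp [c1, List.map_ofFn, List.sum_ofFn, Function.comp]
  have hc2 : ∀ f : Fin t → Bool × Bool, c2 (List.ofFn f) = ∑ i, bi (f i).2 := by
    intro f; simp [c2, List.map_ofFn, List.sum_ofFn, Function.comp]
  have e3 : {f : Fin t → Bool × Bool //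
        c1 (List.ofFn f) = (u : ℤ) ∧ c2 (List.ofFn f) = (d : ℤ)} ≃
      {f : Fin t → Bool × Bool //
        (∑ i, bi (f i).1) = (u : ℤ) ∧ (∑ i, bi (f i).2) = (d : ℤ)} :=
    Equiv.subtypeEquivRight (fun f => by rw [hc1, hc2])
  rw [Nat.card_congr (((e1.trans e2).trans e3)), card_fun_pair]

end ZZaux

namespace ZZaux

lemma zchoose_eq_zero {x : ℤ} {y : ℤ} (h : ¬ (0 ≤ y ∧ y ≤ x)) : zchoose x y = 0 := by
  simp [zchoose, h]

lemma zchoose_nat (t u : ℕ) (h : u ≤ t) : zchoose (t : ℤ) (u : ℤ) = t.choose u := by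
  have hc : 0 ≤ (u : ℤ) ∧ (u : ℤ) ≤ (t : ℤ) := by omega
  rw [zchoose, if_pos hc]
  simp

lemma card_lists_int (t : ℕ) (u d : ℤ) :
    Nat.card {l : List (Bool × Bool) // l.length = t ∧ c1 l = u ∧ c2 l = d} =
      zchoose (t : ℤ) u * zchoose (t : ℤ) d := by
  by_cases h : (0 ≤ u ∧ u ≤ (t : ℤ)) ∧ (0 ≤ d ∧ d ≤ (t : ℤ))
  · obtain ⟨u', rfl⟩ : ∃ u' : ℕ, u = (u' : ℤ) := ⟨u.toNat, by omega⟩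
    obtain ⟨d', rfl⟩ : ∃ d' : ℕ, d = (d' : ℤ) := ⟨d.toNat, by omega⟩
    rw [card_lists, zchoose_nat t u' (by exact_mod_cast h.1.2),
      zchoose_nat t d' (by exact_mod_cast h.2.2)]
  · have he : IsEmpty {l : List (Bool × Bool) // l.length = t ∧ c1 l = u ∧ c2 l = d} := by
      constructor
      rintro ⟨l, h1, h2, h3⟩
      have b1 := c1_nonneg l
      have b2 := c1_le_length l
      have b3 := c2_nonneg l
      have b4 := c2_le_length l
      rw [h1] at b2 b4
      omega
    rw [Nat.card_of_isEmpty]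
    rcases not_and_or.1 h with h' | h'
    · rw [zchoose_eq_zero h', zero_mul]
    · rw [zchoose_eq_zero h', mul_zero]

lemma nat_card_sigma {m : ℕ} (A : Fin m → Type*) [∀ i, Finite (A i)] :
    Nat.card (Σ i, A i) = ∑ i, Nat.card (A i) := by
  have : ∀ i, Fintype (A i) := fun i => Fintype.ofFinite _
  simp [Nat.card_eq_fintype_card, Fintype.card_sigma]

end ZZaux

namespace ZZaux

lemma finite_T (m k' : ℤ) : Finite {l : List (Bool × Bool) // sz l = m ∧ al l = k'} := by
  have hsub : {l : List (Bool × Bool) | sz l = m ∧ al l = k'} ⊆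
      {l : List (Bool × Bool) | l.length ≤ m.toNat} := by
    intro l hl
    have h1 := two_length_le_sz l
    have h2 := hl.1
    simp only [Set.mem_setOf_eq]
    omega
  exact ((List.finite_length_le _ m.toNat).subset hsub).to_subtype

lemma finite_TL (t : ℕ) (P : List (Bool × Bool) → Prop) :
    Finite {l : List (Bool × Bool) // l.length = t ∧ P l} := by
  have hsub : {l : List (Bool × Bool) | l.length = t ∧ P l} ⊆
      {l : List (Bool × Bool) | l.length = t} := fun l hl => hl.1
  exact ((List.finite_length_eq _ t).subset hsub).to_subtype

lemma cardT1 (a b : ℕ) (n' k' : ℤ) (hn : n' = (a : ℤ) + b) (hk : k' = (b : ℤ) - a) :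
    Nat.card {l : List (Bool × Bool) // sz l = n' ∧ al l = k'} =
      ∑ t ∈ Finset.range (a + b + 1),
        zchoose (t : ℤ) ((a : ℤ) - t) * zchoose (t : ℤ) ((b : ℤ) - t) := by
  subst hn hk
  have eσ : {l : List (Bool × Bool) // sz l = (a : ℤ) + b ∧ al l = (b : ℤ) - a} ≃
      Σ t : Fin (a + b + 1), {l : List (Bool × Bool) //
        l.length = (t : ℕ) ∧ (sz l = (a : ℤ) + b ∧ al l = (b : ℤ) - a)} := by
    refine ⟨fun x => ⟨⟨x.1.length, ?_⟩, ⟨x.1, rfl, x.2⟩⟩, fun y => ⟨y.2.1, y.2.2.2⟩, ?_, ?_⟩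
    · have h1 := two_length_le_sz x.1
      have h2 := x.2.1
      omega
    · intro x; rfl
    · rintro ⟨⟨t, ht⟩, ⟨l, hlen, hP⟩⟩
      simp only at hlen ⊢
      subst hlen
      rfl
  rw [Nat.card_congr eσ]
  have : ∀ t : Fin (a + b + 1), Finite {l : List (Bool × Bool) //
      l.length = (t : ℕ) ∧ (sz l = (a : ℤ) + b ∧ al l = (b : ℤ) - a)} :=
    fun t => finite_TL _ _
  rw [nat_card_sigma]
  rw [Fin.sum_univ_eq_sum_range (fun t => Nat.card {l : List (Bool × Bool) //
      l.length = t ∧ (sz l = (a : ℤ) + b ∧ al l = (b : ℤ) - a)})]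
  refine Finset.sum_congr rfl (fun t _ => ?_)
  have e2 : {l : List (Bool × Bool) // l.length = t ∧ (sz l = (a : ℤ) + b ∧ al l = (b : ℤ) - a)} ≃
      {l : List (Bool × Bool) // l.length = t ∧ (c1 l = (a : ℤ) - t ∧ c2 l = (b : ℤ) - t)} := by
    refine Equiv.subtypeEquivRight (fun l => ?_)
    have hs := sz_eq l
    have hal := al_eq l
    constructor
    · rintro ⟨h1, h2, h3⟩
      refine ⟨h1, ?_, ?_⟩ <;> rw [h1] at hs <;> omega
    · rintro ⟨h1, h2, h3⟩
      refine ⟨h1, ?_, ?_⟩ <;> rw [h1] at hs <;> omega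
  rw [Nat.card_congr e2, card_lists_int]

end ZZaux

namespace ZZaux

lemma sz_swap (l : List (Bool × Bool)) : sz (l.map Prod.swap) = sz l := by
  induction l with
  | nil => simp
  | cons q l ih => simp [ih]; ring

lemma al_swap (l : List (Bool × Bool)) : al (l.map Prod.swap) = -al l := by
  induction l with
  | nil => simp
  | cons q l ih => simp [ih]; ring

lemma map_swap_swap (l : List (Bool × Bool)) : (l.map Prod.swap).map Prod.swap = l := by
  rw [List.map_map, show (Prod.swap ∘ Prod.swap : Bool × Bool → Bool × Bool) = id from
    funext (fun p => Prod.swap_swap p), List.map_id]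

end ZZaux

open ZZaux in
theorem stmt12 (n : ℕ) (k : ℤ) (hpar : (n : ℤ) % 2 = k % 2)
    (hk : k.natAbs ≤ n) (hne : ¬ (n = 0 ∧ k = 0)) :
    Nat.card {p : List KStep //
        pathSize p = (n : ℤ) ∧ pathAlt p = k ∧ IsZigzag p} =
      2 * ∑ i ∈ (Finset.range (((n : ℤ) - k + 1).toNat)).filter (fun i => Even i),
        zchoose ((i : ℤ) / 2) (((n : ℤ) - i - k) / 2) *
          zchoose ((i : ℤ) / 2) (((n : ℤ) - i + k) / 2) := by
  obtain ⟨a, ha⟩ : ∃ a : ℕ, (n : ℤ) - k = 2 * a := ⟨((n : ℤ) - k).toNat / 2, by omega⟩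
  obtain ⟨b, hb⟩ : ∃ b : ℕ, (n : ℤ) + k = 2 * b := ⟨((n : ℤ) + k).toNat / 2, by omega⟩
  have hn1 : 0 < n := by
    rcases Nat.eq_zero_or_pos n with h | h
    · exact absurd ⟨h, by omega⟩ hne
    · exact h
  haveI hF1 : Finite {l : List (Bool × Bool) // sz l = (n : ℤ) ∧ al l = k} := finite_T _ _
  haveI hF2 : Finite {l : List (Bool × Bool) // sz l = (n : ℤ) ∧ al l = -k} := finite_T _ _
  have hφ : Nat.card ({l : List (Bool × Bool) // sz l = (n : ℤ) ∧ al l = k} ⊕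
      {l : List (Bool × Bool) // sz l = (n : ℤ) ∧ al l = -k}) =
      Nat.card {p : List KStep // pathSize p = (n : ℤ) ∧ pathAlt p = k ∧ IsZigzag p} := by
    apply Nat.card_eq_of_bijective (Sum.elim
      (fun x : {l : List (Bool × Bool) // sz l = (n : ℤ) ∧ al l = k} =>
        (⟨dec true x.1, by rw [pathSize_dec]; exact x.2.1,
          by rw [pathAlt_dec]; simpa using x.2.2, (zig_dec true x.1).1⟩ :
          {p : List KStep // pathSize p = (n : ℤ) ∧ pathAlt p = k ∧ IsZigzag p}))
      (fun x : {l : List (Bool × Bool) // sz l = (n : ℤ) ∧ al l = -k} =>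
        (⟨dec false x.1, by rw [pathSize_dec]; exact x.2.1,
          by rw [pathAlt_dec]; have := x.2.2; simp only [Bool.false_eq_true, if_false]; omega,
          (zig_dec false x.1).1⟩ :
          {p : List KStep // pathSize p = (n : ℤ) ∧ pathAlt p = k ∧ IsZigzag p})))
    constructor
    · rintro (⟨l, hl⟩ | ⟨l, hl⟩) (⟨l', hl'⟩ | ⟨l', hl'⟩) h <;>
        simp only [Sum.elim_inl, Sum.elim_inr, Subtype.mk.injEq] at h
      · exact congrArg Sum.inl (Subtype.ext (dec_inj h))
      · exfalso
        rcases l with _ | ⟨q, l0⟩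
        · have := hl.1; simp at this; omega
        rcases l' with _ | ⟨q', l0'⟩
        · have := hl'.1; simp at this; omega
        simp only [dec, List.cons.injEq] at h
        have := congrArg sgn h.1
        simp at this
      · exfalso
        rcases l with _ | ⟨q, l0⟩
        · have := hl.1; simp at this; omega
        rcases l' with _ | ⟨q', l0'⟩
        · have := hl'.1; simp at this; omega
        simp only [dec, List.cons.injEq] at h
        have := congrArg sgn h.1
        simp at this
      · exact congrArg Sum.inr (Subtype.ext (dec_inj h))
    · rintro ⟨p, hs, hal, hz⟩
      rcases p with _ | ⟨a0, rest⟩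
      · exfalso; simp at hs; omega
      have hlen : (a0 :: rest).length % 2 = 0 := by
        have hp := parity_length (a0 :: rest)
        rw [hs, hal] at hp
        omega
      have hhead : ∀ c ∈ (a0 :: rest).head?, sgn c = sgn a0 := by
        intro c hc; simp at hc; subst hc; rfl
      have hdec := dec_enc (a0 :: rest) (sgn a0) hz hlen hhead
      cases hs0 : sgn a0 with
      | false =>
        rw [hs0] at hdec
        have h1 : sz (enc (a0 :: rest)) = (n : ℤ) := by
          rw [← pathSize_dec false, hdec]; exact hs
        have h2 : al (enc (a0 :: rest)) = -k := by
          have hpa := pathAlt_dec false (enc (a0 :: rest))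
          rw [hdec, hal] at hpa
          simp only [Bool.false_eq_true, if_false] at hpa
          omega
        exact ⟨Sum.inr ⟨enc (a0 :: rest), h1, h2⟩, Subtype.ext hdec⟩
      | true =>
        rw [hs0] at hdec
        have h1 : sz (enc (a0 :: rest)) = (n : ℤ) := by
          rw [← pathSize_dec true, hdec]; exact hs
        have h2 : al (enc (a0 :: rest)) = k := by
          have hpa := pathAlt_dec true (enc (a0 :: rest))
          rw [hdec, hal] at hpa
          simpa using hpa.symm
        exact ⟨Sum.inl ⟨enc (a0 :: rest), h1, h2⟩, Subtype.ext hdec⟩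
  have hswap : Nat.card {l : List (Bool × Bool) // sz l = (n : ℤ) ∧ al l = -k} =
      Nat.card {l : List (Bool × Bool) // sz l = (n : ℤ) ∧ al l = k} := by
    refine Nat.card_congr ⟨fun x => ⟨x.1.map Prod.swap, by rw [sz_swap]; exact x.2.1,
        by rw [al_swap, x.2.2]; ring⟩,
      fun x => ⟨x.1.map Prod.swap, by rw [sz_swap]; exact x.2.1,
        by rw [al_swap, x.2.2]⟩, ?_, ?_⟩
    · intro x; exact Subtype.ext (map_swap_swap x.1)
    · intro x; exact Subtype.ext (map_swap_swap x.1)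
  have hext : ∑ t ∈ Finset.range (a + 1), zchoose (t : ℤ) ((a : ℤ) - t) * zchoose (t : ℤ) ((b : ℤ) - t)
      = ∑ t ∈ Finset.range (a + b + 1),
          zchoose (t : ℤ) ((a : ℤ) - t) * zchoose (t : ℤ) ((b : ℤ) - t) := by
    refine Finset.sum_subset (Finset.range_subset_range.2 (by omega)) (fun t _ ht => ?_)
    simp only [Finset.mem_range] at ht
    rw [zchoose_eq_zero (fun hc => by omega), zero_mul]
  have hfinal : ∑ t ∈ Finset.range (a + b + 1),
        zchoose (t : ℤ) ((a : ℤ) - t) * zchoose (t : ℤ) ((b : ℤ) - t)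
      = ∑ i ∈ (Finset.range (2 * a + 1)).filter (fun i => Even i),
          zchoose ((i : ℤ) / 2) (((n : ℤ) - i - k) / 2) *
            zchoose ((i : ℤ) / 2) (((n : ℤ) - i + k) / 2) := by
    rw [← hext]
    refine Finset.sum_nbij' (fun t => 2 * t) (fun i => i / 2) ?_ ?_ ?_ ?_ ?_
    · intro t htm
      simp only [Finset.mem_range] at htm
      simp only [Finset.mem_filter, Finset.mem_range, Nat.even_iff]
      omega
    · intro i him
      simp only [Finset.mem_filter, Finset.mem_range, Nat.even_iff] at him
      simp only [Finset.mem_range]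
      omega
    · intro t _; omega
    · intro i him
      simp only [Finset.mem_filter, Finset.mem_range, Nat.even_iff] at him
      omega
    · intro t htm
      have e1 : ((2 * t : ℕ) : ℤ) / 2 = (t : ℤ) := by push_cast; omega
      have e2 : ((n : ℤ) - (2 * t : ℕ) - k) / 2 = (a : ℤ) - t := by push_cast; omega
      have e3 : ((n : ℤ) - (2 * t : ℕ) + k) / 2 = (b : ℤ) - t := by push_cast; omega
      rw [e1, e2, e3]
  have htoNat : (((n : ℤ) - k + 1)).toNat = 2 * a + 1 := by omega
  rw [← hφ, Nat.card_sum, hswap, ← two_mul,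
    cardT1 a b (n : ℤ) k (by omega) (by omega), htoNat, hfinal]
end
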